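/- arXiv:2502.18831 — 9 statements merged into one kernel-verified Lean document; each statement's English description precedes it below -/
import Mathlib

section
/- Assume a ≠ 0, b² − a c > 0, ω_p ≥ 0, and that reals T, Φ satisfy the dispersion relation a T² + 2 b T Φ + c Φ² + ω_p² = 0 with Φ ≠ 0. Set p_t = a T + b Φ, p_φ = b T + c Φ, and ε = 1 if Φ > 0, ε = −1 if Φ < 0. Then p_t² + ω_p² a > 0 and p_φ = (b/a) p_t − ε (1/a) √(b² − a c) √(p_t² + ω_p² a). -/
open Real

/-! The dispersion relation says exactly that `p_t² + ω_p² a = (b² − a c) Φ²`, since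
`(a T + b Φ)² − a (a T² + 2 b T Φ + c Φ²) = (b² − a c) Φ²`. Taking square roots,
`ε √(b² − a c) √(p_t² + ω_p² a) = (b² − a c) Φ`, and the claimed formula for `p_φ`,
multiplied by `a`, becomes the identity `a (b T + c Φ) = b (a T + b Φ) − (b² − a c) Φ`. -/

theorem sq_add_eq_discr_mul_sq_of_dispersion {a b c ωp T Φ : ℝ}
    (hdisp : a * T ^ 2 + 2 * b * T * Φ + c * Φ ^ 2 + ωp ^ 2 = 0) :
    (a * T + b * Φ) ^ 2 + ωp ^ 2 * a = (b ^ 2 - a * c) * Φ ^ 2 := by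
  linear_combination a * hdisp

theorem ite_pos_one_neg_one_mul_abs {x : ℝ} (hx : x ≠ 0) :
    (if 0 < x then 1 else -1 : ℝ) * |x| = x := by
  rcases hx.lt_or_gt with h | h
  · simp [not_lt.mpr h.le, abs_of_neg h]
  · simp [h, abs_of_pos h]

theorem sqrt_mul_sqrt_mul_sq {D : ℝ} (hD : 0 ≤ D) (x : ℝ) :
    √D * √(D * x ^ 2) = D * |x| := by
  rw [sqrt_mul hD, sqrt_sq_eq_abs, ← mul_assoc, mul_self_sqrt hD]

theorem stmt0_general (a b c ωp T Φ : ℝ)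
    (ha : a ≠ 0) (hdet : 0 < b ^ 2 - a * c)
    (hdisp : a * T ^ 2 + 2 * b * T * Φ + c * Φ ^ 2 + ωp ^ 2 = 0)
    (hΦ : Φ ≠ 0)
    (pt pφ ε : ℝ)
    (hpt : pt = a * T + b * Φ) (hpφ : pφ = b * T + c * Φ)
    (hε : ε = if 0 < Φ then 1 else -1) :
    0 < pt ^ 2 + ωp ^ 2 * a ∧
      pφ = (b / a) * pt -
        ε * (1 / a) * Real.sqrt (b ^ 2 - a * c) * Real.sqrt (pt ^ 2 + ωp ^ 2 * a) := by
  subst hpt hpφ hε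
  rw [sq_add_eq_discr_mul_sq_of_dispersion hdisp]
  refine ⟨by positivity, ?_⟩
  rw [mul_assoc _ √(b ^ 2 - a * c), sqrt_mul_sqrt_mul_sq hdet.le]
  field_simp
  linear_combination (b ^ 2 - a * c) * ite_pos_one_neg_one_mul_abs hΦ

/-- At a point of circular tangency, the angular momentum `p_φ` of a light ray in a
plasma is determined by `p_t` via the potential formula, with the sign given by the
sign of `Φ = φ̇`. -/
theorem stmt0 (a b c ωp T Φ : ℝ)
    (ha : a ≠ 0) (hdet : 0 < b ^ 2 - a * c) (hωp : 0 ≤ ωp)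
    (hdisp : a * T ^ 2 + 2 * b * T * Φ + c * Φ ^ 2 + ωp ^ 2 = 0)
    (hΦ : Φ ≠ 0)
    (pt pφ ε : ℝ)
    (hpt : pt = a * T + b * Φ) (hpφ : pφ = b * T + c * Φ)
    (hε : ε = if 0 < Φ then 1 else -1) :
    0 < pt ^ 2 + ωp ^ 2 * a ∧
      pφ = (b / a) * pt -
        ε * (1 / a) * Real.sqrt (b ^ 2 - a * c) * Real.sqrt (pt ^ 2 + ωp ^ 2 * a) :=
  stmt0_general a b c ωp T Φ ha hdet hdisp hΦ pt pφ ε hpt hpφ hε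
end

section
/- Let G : ℝ² → (real symmetric 4×4 matrices) be continuously differentiable with G(y) invertible for every y, with pointwise inverse g(y) = G(y)⁻¹, and let W : ℝ² → ℝ be continuously differentiable. Let x : ℝ → ℝ⁴ and p : ℝ → ℝ⁴ be differentiable curves satisfying ẋ^μ(s) = Σ_σ G^{μσ}(x²(s),x³(s)) p_σ(s) for μ = 0,1,2,3, ṗ₀(s) = ṗ₁(s) = 0, and ṗ_i(s) = −(1/2)(Σ_{ρ,σ} ∂_i G^{ρσ}(x²(s),x³(s)) p_ρ(s) p_σ(s) + ∂_i W(x²(s),x³(s))) for i = 2,3. Suppose at s = s₀: ẋ²(s₀) = ẋ³(s₀) = 0, the constraint Σ_{ρ,σ} G^{ρσ} p_ρ p_σ + W = 0 holds, and at y₀ = (x²(s₀),x³(s₀)) the components a = g₀₀(y₀), b = g₀₁(y₀), c = g₁₁(y₀) satisfy a ≠ 0, b² − a c > 0 and p₀(s₀)² + W(y₀)·a > 0. Then ẋ¹(s₀) ≠ 0 and, with ε = 1 if ẋ¹(s₀) > 0 and ε = −1 if ẋ¹(s₀) < 0, the second derivative ẍ^μ(s₀) exists and equals −[√(p₀(s₀)²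 + W(y₀) a)/√(b² − a c)] · Σ_{i=2,3} G^{μi}(y₀) ∂_i Ψ(y₀), where Ψ(y) = −ε (g₀₁(y)/g₀₀(y)) p₀(s₀) + (1/g₀₀(y)) √(g₀₁(y)² − g₀₀(y) g₁₁(y)) √(p₀(s₀)² + W(y) g₀₀(y)). -/
open Real Filter

/-- Partial derivative with respect to the first coordinate of `ℝ²`
(i.e. the coordinate `x²` of spacetime). -/
noncomputable def pd1 (f : ℝ × ℝ → ℝ) (y : ℝ × ℝ) : ℝ := fderiv ℝ f y (1, 0)

/-- Partial derivative with respect to the second coordinate of `ℝ²`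
(i.e. the coordinate `x³` of spacetime). -/
noncomputable def pd2 (f : ℝ × ℝ → ℝ) (y : ℝ × ℝ) : ℝ := fderiv ℝ f y (0, 1)

/-!
At `s₀` the velocity `X = ẋ(s₀) = G p` has `X² = X³ = 0`, so `p = g X` gives
`p₀ = a X⁰ + b X¹`, and the constraint `p·X + W = 0` gives `W = -(a X⁰² + 2 b X⁰ X¹ + c X¹²)`.
Hence `p₀² + W a = (b² - a c) X¹²`, which forces `X¹ ≠ 0` and identifies the prefactor
`√(p₀² + W a) / √(b² - a c)` with `ε X¹`.

Because `ẋ² = ẋ³ = 0`, the metric along the ray is stationary to first order, so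
`ẍ^μ = G^{μ2} ṗ₂ + G^{μ3} ṗ₃`. Differentiating `g G = 1` turns `∂ᵢG^{ρσ} p_ρ p_σ` into
`-∂ᵢg_{μν} X^μ X^ν`, and the chain rule applied to `Ψ` (a function of `g₀₀, g₀₁, g₁₁, W`) then
shows `ṗᵢ = -ε X¹ ∂ᵢΨ`.
-/

open Topology Matrix

section EntrywiseDerivative

variable {E ι : Type*} [NormedAddCommGroup E] [NormedSpace ℝ E] {M : E → Matrix ι ι ℝ} {y : E}

variable (M y) in
noncomputable def entrywiseFDeriv (w : E) : Matrix ι ι ℝ :=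
  Matrix.of fun i j => fderiv ℝ (fun z => M z i j) y w

theorem isSymm_entrywiseFDeriv (hM : ∀ z, (M z).IsSymm) (w : E) :
    (entrywiseFDeriv M y w).IsSymm := by
  ext i j
  simp only [transpose_apply, entrywiseFDeriv, of_apply]
  congr! 3 with z
  exact (hM z).apply i j

variable [Fintype ι] [DecidableEq ι]

theorem differentiableAt_det (hM : ∀ i j, DifferentiableAt ℝ (fun z => M z i j) y) :
    DifferentiableAt ℝ (fun z => (M z).det) y := by
  simp only [det_apply']
  fun_prop

theorem differentiableAt_inv_apply (hM : ∀ i j, DifferentiableAt ℝ (fun z => M z i j) y)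
    (hdet : IsUnit (M y).det) (i j : ι) :
    DifferentiableAt ℝ (fun z => (M z)⁻¹ i j) y := by
  have hadj : DifferentiableAt ℝ (fun z => (M z).adjugate i j) y := by
    simp only [adjugate_apply]
    refine differentiableAt_det fun k l => ?_
    by_cases hk : k = j
    · simp [updateRow_apply, hk]
    · simpa [updateRow_apply, hk] using hM k l
  simp only [inv_def, Matrix.smul_apply, Ring.inverse_eq_inv', smul_eq_mul]
  exact ((differentiableAt_det hM).inv hdet.ne_zero).mul hadj

theorem entrywiseFDeriv_inv (hM : ∀ i j, DifferentiableAt ℝ (fun z => M z i j) y)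
    (hdet : IsUnit (M y).det) (w : E) :
    entrywiseFDeriv (fun z => (M z)⁻¹) y w
      = -((M y)⁻¹ * entrywiseFDeriv M y w * (M y)⁻¹) := by
  have hinv := differentiableAt_inv_apply hM hdet
  have hunit : ∀ᶠ z in 𝓝 y, IsUnit (M z).det := by
    filter_upwards [(differentiableAt_det hM).continuousAt.eventually_ne hdet.ne_zero]
      with z hz using hz.isUnit
  -- differentiate `M⁻¹ * M = 1` near `y`
  have hprod : (entrywiseFDeriv (fun z => (M z)⁻¹) y w) * M y
      = -((M y)⁻¹ * entrywiseFDeriv M y w) := by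
    ext i j
    have hsum := HasFDerivAt.fun_sum (u := Finset.univ)
      fun k _ => (hinv i k).hasFDerivAt.mul (hM k j).hasFDerivAt
    have hconst : HasFDerivAt (fun z => ∑ k, (M z)⁻¹ i k * M z k j) (0 : E →L[ℝ] ℝ) y :=
      (hasFDerivAt_const ((1 : Matrix ι ι ℝ) i j) y).congr_of_eventuallyEq <| by
        filter_upwards [hunit] with z hz
        rw [← mul_apply, nonsing_inv_mul _ hz]
    have := congrArg (fun L => L w) (hsum.unique hconst)
    simp only [_root_.sum_apply, _root_.add_apply, _root_.smul_apply,
      smul_eq_mul, _root_.zero_apply, Finset.sum_add_distrib] at this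
    simp only [mul_apply, Matrix.neg_apply, entrywiseFDeriv, of_apply]
    rw [eq_neg_iff_add_eq_zero, add_comm, ← this]
    simp only [mul_comm]
  calc entrywiseFDeriv (fun z => (M z)⁻¹) y w
      = entrywiseFDeriv (fun z => (M z)⁻¹) y w * M y * (M y)⁻¹ := by
        rw [Matrix.mul_assoc, mul_nonsing_inv _ hdet, Matrix.mul_one]
    _ = -((M y)⁻¹ * entrywiseFDeriv M y w * (M y)⁻¹) := by rw [hprod, Matrix.neg_mul]

theorem dotProduct_entrywiseFDeriv_mulVec (hM : ∀ i j, DifferentiableAt ℝ (fun z => M z i j) y)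
    (hdet : IsUnit (M y).det) (hsymm : (M y).IsSymm) (q : ι → ℝ) (w : E) :
    q ⬝ᵥ (entrywiseFDeriv M y w *ᵥ q)
      = -((M y *ᵥ q) ⬝ᵥ (entrywiseFDeriv (fun z => (M z)⁻¹) y w *ᵥ (M y *ᵥ q))) := by
  have hq : (M y)⁻¹ *ᵥ (M y *ᵥ q) = q := by
    rw [mulVec_mulVec, nonsing_inv_mul _ hdet, one_mulVec]
  have hq' : (M y *ᵥ q) ᵥ* (M y)⁻¹ = q := by
    rw [← mulVec_transpose, transpose_nonsing_inv, hsymm.eq, hq]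
  rw [entrywiseFDeriv_inv hM hdet, neg_mulVec, dotProduct_neg, neg_neg, ← mulVec_mulVec,
    ← mulVec_mulVec, hq, dotProduct_mulVec (M y *ᵥ q), hq']

end EntrywiseDerivative

theorem sum_sum_mul_mul_eq_dotProduct_mulVec {ι : Type*} [Fintype ι] (A : Matrix ι ι ℝ)
    (q : ι → ℝ) : ∑ ρ, ∑ σ, A ρ σ * q ρ * q σ = q ⬝ᵥ (A *ᵥ q) := by
  simp only [dotProduct, mulVec, Finset.mul_sum]
  exact Finset.sum_congr rfl fun ρ _ => Finset.sum_congr rfl fun σ _ => by ring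

theorem dotProduct_mulVec_of_two_three_eq_zero {A : Matrix (Fin 4) (Fin 4) ℝ} (hA : A.IsSymm)
    {X : Fin 4 → ℝ} (h2 : X 2 = 0) (h3 : X 3 = 0) :
    X ⬝ᵥ (A *ᵥ X) = A 0 0 * X 0 ^ 2 + 2 * A 0 1 * X 0 * X 1 + A 1 1 * X 1 ^ 2 := by
  simp only [dotProduct, mulVec, Fin.sum_univ_four, h2, h3, hA.apply 0 1]
  ring

theorem apply_zero_eq_of_mulVec_two_three_eq_zero {G : Matrix (Fin 4) (Fin 4) ℝ}
    (hG : IsUnit G.det) {q : Fin 4 → ℝ} (h2 : (G *ᵥ q) 2 = 0) (h3 : (G *ᵥ q) 3 = 0) :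
    q 0 = G⁻¹ 0 0 * (G *ᵥ q) 0 + G⁻¹ 0 1 * (G *ᵥ q) 1 := by
  conv_lhs => rw [← one_mulVec q, ← nonsing_inv_mul G hG, ← mulVec_mulVec]
  rw [mulVec, dotProduct, Fin.sum_univ_four, h2, h3]
  ring

theorem sum_mul_mul_eq_of_mulVec_two_three_eq_zero {G : Matrix (Fin 4) (Fin 4) ℝ}
    (hG : IsUnit G.det) (hsymm : G.IsSymm) {q : Fin 4 → ℝ} (h2 : (G *ᵥ q) 2 = 0)
    (h3 : (G *ᵥ q) 3 = 0) :
    ∑ ρ, ∑ σ, G ρ σ * q ρ * q σ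
      = G⁻¹ 0 0 * (G *ᵥ q) 0 ^ 2 + 2 * G⁻¹ 0 1 * (G *ᵥ q) 0 * (G *ᵥ q) 1
        + G⁻¹ 1 1 * (G *ᵥ q) 1 ^ 2 := by
  rw [sum_sum_mul_mul_eq_dotProduct_mulVec,
    ← dotProduct_mulVec_of_two_three_eq_zero hsymm.inv h2 h3, mulVec_mulVec,
    nonsing_inv_mul G hG, one_mulVec, dotProduct_comm]

theorem sqrt_sq_add_mul_eq {A B C V q u v ε : ℝ} (hdisc : 0 ≤ B ^ 2 - A * C)
    (hq : q = A * u + B * v) (hV : V = -(A * u ^ 2 + 2 * B * u * v + C * v ^ 2))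
    (hε : ε ^ 2 = 1) (hεv : 0 ≤ ε * v) :
    √(q ^ 2 + V * A) = ε * v * √(B ^ 2 - A * C) := by
  rw [← Real.sqrt_sq (mul_nonneg hεv (Real.sqrt_nonneg _))]
  congr 1
  linear_combination (q + A * u + B * v) * hq + A * hV - (v ^ 2 * √(B ^ 2 - A * C) ^ 2) * hε
    - v ^ 2 * Real.sq_sqrt hdisc

theorem sum_fderiv_mul_mul_eq_of_mulVec_two_three_eq_zero {E : Type*} [NormedAddCommGroup E]
    [NormedSpace ℝ E] {G : E → Matrix (Fin 4) (Fin 4) ℝ} {y : E}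
    (hG : ∀ i j, DifferentiableAt ℝ (fun z => G z i j) y) (hsymm : ∀ z, (G z).IsSymm)
    (hdet : IsUnit (G y).det) {q : Fin 4 → ℝ} (h2 : (G y *ᵥ q) 2 = 0) (h3 : (G y *ᵥ q) 3 = 0)
    (w : E) :
    ∑ ρ, ∑ σ, fderiv ℝ (fun z => G z ρ σ) y w * q ρ * q σ
      = -(fderiv ℝ (fun z => (G z)⁻¹ 0 0) y w * (G y *ᵥ q) 0 ^ 2
        + 2 * fderiv ℝ (fun z => (G z)⁻¹ 0 1) y w * (G y *ᵥ q) 0 * (G y *ᵥ q) 1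
        + fderiv ℝ (fun z => (G z)⁻¹ 1 1) y w * (G y *ᵥ q) 1 ^ 2) := by
  calc ∑ ρ, ∑ σ, fderiv ℝ (fun z => G z ρ σ) y w * q ρ * q σ
      = q ⬝ᵥ (entrywiseFDeriv G y w *ᵥ q) := sum_sum_mul_mul_eq_dotProduct_mulVec _ q
    _ = -((G y *ᵥ q) ⬝ᵥ (entrywiseFDeriv (fun z => (G z)⁻¹) y w *ᵥ (G y *ᵥ q))) :=
      dotProduct_entrywiseFDeriv_mulVec hG hdet (hsymm y) q w
    _ = _ := by
      rw [dotProduct_mulVec_of_two_three_eq_zero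
        (isSymm_entrywiseFDeriv (fun z => (hsymm z).inv) w) h2 h3]
      rfl

theorem HasDerivAt.sum_mul_of_hasDerivAt_zero {ι : Type*} [Fintype ι] {A q : ℝ → ι → ℝ}
    {q' : ι → ℝ} {s : ℝ} (hA : ∀ σ, HasDerivAt (fun t => A t σ) 0 s)
    (hq : ∀ σ, HasDerivAt (fun t => q t σ) (q' σ) s) :
    HasDerivAt (fun t => ∑ σ, A t σ * q t σ) (∑ σ, A s σ * q' σ) s := by
  simpa using HasDerivAt.fun_sum fun σ _ => (hA σ).mul (hq σ)

theorem ite_pos_one_neg_one_mul_pos {v : ℝ} (hv : v ≠ 0) :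
    0 < (if 0 < v then (1 : ℝ) else -1) * v := by
  split_ifs with h
  · linarith
  · linarith [lt_of_le_of_ne (not_lt.1 h) hv]

theorem hasFDerivAt_potential {E : Type*} [NormedAddCommGroup E] [NormedSpace ℝ E]
    {A B C V : E → ℝ} {A' B' C' V' : E →L[ℝ] ℝ} {y : E}
    (hA : HasFDerivAt A A' y) (hB : HasFDerivAt B B' y) (hC : HasFDerivAt C C' y)
    (hV : HasFDerivAt V V' y) {q u v ε : ℝ} (hA0 : A y ≠ 0)
    (hdisc : 0 < B y ^ 2 - A y * C y) (hq : q = A y * u + B y * v)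
    (hVy : V y = -(A y * u ^ 2 + 2 * B y * u * v + C y * v ^ 2))
    (hε : ε ^ 2 = 1) (hεv : 0 < ε * v) :
    HasFDerivAt
      (fun z => -ε * (B z / A z) * q + 1 / A z * √(B z ^ 2 - A z * C z) * √(q ^ 2 + V z * A z))
      (-(ε * v)⁻¹ • ((u ^ 2 / 2) • A' + (u * v) • B' + (v ^ 2 / 2) • C' - (1 / 2 : ℝ) • V')) y := by
  set S := √(B y ^ 2 - A y * C y) with hS
  have hSpos : 0 < S := Real.sqrt_pos.2 hdisc
  have hSsq : S ^ 2 = B y ^ 2 - A y * C y := Real.sq_sqrt hdisc.le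
  have hroot : √(q ^ 2 + V y * A y) = ε * v * S :=
    sqrt_sq_add_mul_eq hdisc.le hq hVy hε hεv.le
  have hinv : HasFDerivAt (fun z => (A z)⁻¹) (-(A y ^ 2)⁻¹ • A') y :=
    (hasDerivAt_inv hA0).comp_hasFDerivAt y hA
  have hS' := ((hB.pow 2).sub (hA.mul hC)).sqrt hdisc.ne'
  have hR' := ((hasFDerivAt_const (q ^ 2) y).add (hV.mul hA)).sqrt
    (Real.sqrt_ne_zero'.1 (hroot ▸ (mul_pos hεv hSpos).ne')).ne'
  have h := (((hB.mul hinv).const_mul (-ε)).mul_const q).add ((hinv.mul hS').mul hR')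
  refine h.congr_fderiv ?_ |>.congr_of_eventuallyEq ?_
  · ext w
    simp only [_root_.add_apply, _root_.smul_apply, _root_.sub_apply, Pi.sub_apply,
      Pi.mul_apply, Pi.add_apply, _root_.zero_apply, smul_eq_mul, nsmul_eq_mul, ← hS, hroot]
    have hv : v ≠ 0 := by rintro rfl; simp at hεv
    have hε0 : ε ≠ 0 := by rintro rfl; simp at hεv
    rw [hVy]
    subst hq
    field_simp
    linear_combination (-2 * v ^ 2 * ε ^ 2 * A' w) * hSsq
      + (2 * v * A y * u * B y * A' w - 2 * v * A y ^ 2 * u * B' w + v ^ 2 * A y * A' w * C y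
        - v ^ 2 * A y ^ 2 * C' w) * hε
  · exact Eventually.of_forall fun z => by simp [div_eq_mul_inv]

theorem momentum_rate_eq_neg_mul_fderiv_potential {E : Type*} [NormedAddCommGroup E]
    [NormedSpace ℝ E] {G g : E → Matrix (Fin 4) (Fin 4) ℝ} {W Ψ : E → ℝ} {y : E}
    (hG : ∀ i j, DifferentiableAt ℝ (fun z => G z i j) y) (hsymm : ∀ z, (G z).IsSymm)
    (hdet : IsUnit (G y).det) (hg : ∀ z, g z = (G z)⁻¹) (hW : DifferentiableAt ℝ W y)
    {q : Fin 4 → ℝ} {ε : ℝ} (h2 : (G y *ᵥ q) 2 = 0) (h3 : (G y *ᵥ q) 3 = 0)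
    (hq0 : q 0 = g y 0 0 * (G y *ᵥ q) 0 + g y 0 1 * (G y *ᵥ q) 1)
    (hWy : W y = -(g y 0 0 * (G y *ᵥ q) 0 ^ 2 + 2 * g y 0 1 * (G y *ᵥ q) 0 * (G y *ᵥ q) 1
      + g y 1 1 * (G y *ᵥ q) 1 ^ 2))
    (ha : g y 0 0 ≠ 0) (hdisc : 0 < g y 0 1 ^ 2 - g y 0 0 * g y 1 1) (hε : ε ^ 2 = 1)
    (hεX : 0 < ε * (G y *ᵥ q) 1)
    (hΨ : ∀ z, Ψ z = -ε * (g z 0 1 / g z 0 0) * q 0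
      + (1 / g z 0 0) * √(g z 0 1 ^ 2 - g z 0 0 * g z 1 1) * √(q 0 ^ 2 + W z * g z 0 0))
    (w : E) :
    -(1 / 2) * ((∑ ρ, ∑ σ, fderiv ℝ (fun z => G z ρ σ) y w * q ρ * q σ) + fderiv ℝ W y w)
      = -(ε * (G y *ᵥ q) 1) * fderiv ℝ Ψ y w := by
  have hgd : ∀ i j, HasFDerivAt (fun z => g z i j) (fderiv ℝ (fun z => g z i j) y) y := by
    intro i j
    simp only [hg]
    exact (differentiableAt_inv_apply hG hdet i j).hasFDerivAt
  rw [show Ψ = _ from funext hΨ, (hasFDerivAt_potential (hgd 0 0) (hgd 0 1) (hgd 1 1)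
      hW.hasFDerivAt ha hdisc hq0 hWy hε hεX).fderiv,
    sum_fderiv_mul_mul_eq_of_mulVec_two_three_eq_zero hG hsymm hdet h2 h3, _root_.smul_apply,
    smul_eq_mul, ← mul_assoc, neg_mul_neg, mul_inv_cancel₀ hεX.ne', one_mul]
  simp only [hg, _root_.smul_apply, _root_.add_apply, _root_.sub_apply, smul_eq_mul]
  ring

theorem hasDerivAt_deriv_of_hasDerivAt_two_three_zero {G : ℝ × ℝ → Matrix (Fin 4) (Fin 4) ℝ}
    {x p : ℝ → Fin 4 → ℝ} {s₀ P₂ P₃ : ℝ}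
    (hG : ∀ i j, DifferentiableAt ℝ (fun z => G z i j) (x s₀ 2, x s₀ 3))
    (hx : ∀ s μ, HasDerivAt (fun t => x t μ) (∑ σ, G (x s 2, x s 3) μ σ * p s σ) s)
    (hx2 : HasDerivAt (fun t => x t 2) 0 s₀) (hx3 : HasDerivAt (fun t => x t 3) 0 s₀)
    (hp0 : HasDerivAt (fun t => p t 0) 0 s₀) (hp1 : HasDerivAt (fun t => p t 1) 0 s₀)
    (hp2 : HasDerivAt (fun t => p t 2) P₂ s₀) (hp3 : HasDerivAt (fun t => p t 3) P₃ s₀)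
    (μ : Fin 4) :
    HasDerivAt (deriv fun t => x t μ)
      (G (x s₀ 2, x s₀ 3) μ 2 * P₂ + G (x s₀ 2, x s₀ 3) μ 3 * P₃) s₀ := by
  have hGx : ∀ σ, HasDerivAt (fun t => G (x t 2, x t 3) μ σ) 0 s₀ := fun σ => by
    have h := (hG μ σ).hasFDerivAt.comp_hasDerivAt s₀ (hx2.prodMk hx3)
    rwa [Prod.mk_zero_zero, map_zero] at h
  have hp : ∀ σ, HasDerivAt (fun t => p t σ) (![0, 0, P₂, P₃] σ) s₀ := by
    intro σ
    fin_cases σ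
    exacts [hp0, hp1, hp2, hp3]
  rw [show deriv (fun t => x t μ) = _ from funext fun s => (hx s μ).deriv]
  convert HasDerivAt.sum_mul_of_hasDerivAt_zero hGx hp using 1
  simp [Fin.sum_univ_four]

/-- Along a solution of Hamilton's equations for light rays in a plasma on a stationary
axisymmetric spacetime, at a parameter value where `ẋ² = ẋ³ = 0` one has `ẋ¹ ≠ 0` and
the second derivative `ẍ^μ` equals a negative multiple of `Σ_i G^{μi} ∂_i Ψ`,
where `Ψ` is the potential built from the sign of `ẋ¹`. -/
theorem stmt3
    (G : ℝ × ℝ → Matrix (Fin 4) (Fin 4) ℝ)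
    (hGC1 : ∀ μ ν : Fin 4, ContDiff ℝ 1 (fun y => G y μ ν))
    (hGsymm : ∀ y, (G y).IsSymm)
    (hGinv : ∀ y, IsUnit (G y).det)
    (g : ℝ × ℝ → Matrix (Fin 4) (Fin 4) ℝ)
    (hg : ∀ y, g y = (G y)⁻¹)
    (W : ℝ × ℝ → ℝ) (hWC1 : ContDiff ℝ 1 W)
    (x p : ℝ → Fin 4 → ℝ)
    (hx : ∀ (s : ℝ) (μ : Fin 4), HasDerivAt (fun t => x t μ)
        (∑ σ : Fin 4, G (x s 2, x s 3) μ σ * p s σ) s)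
    (hp0 : ∀ s : ℝ, HasDerivAt (fun t => p t 0) 0 s)
    (hp1 : ∀ s : ℝ, HasDerivAt (fun t => p t 1) 0 s)
    (hp2 : ∀ s : ℝ, HasDerivAt (fun t => p t 2)
        (-(1/2) * ((∑ ρ : Fin 4, ∑ σ : Fin 4,
            pd1 (fun y => G y ρ σ) (x s 2, x s 3) * p s ρ * p s σ)
          + pd1 W (x s 2, x s 3))) s)
    (hp3 : ∀ s : ℝ, HasDerivAt (fun t => p t 3)
        (-(1/2) * ((∑ ρ : Fin 4, ∑ σ : Fin 4,
            pd2 (fun y => G y ρ σ) (x s 2, x s 3) * p s ρ * p s σ)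
          + pd2 W (x s 2, x s 3))) s)
    (s₀ : ℝ)
    (hx2 : deriv (fun t => x t 2) s₀ = 0)
    (hx3 : deriv (fun t => x t 3) s₀ = 0)
    (y₀ : ℝ × ℝ) (hy₀ : y₀ = (x s₀ 2, x s₀ 3))
    (hconstraint : (∑ ρ : Fin 4, ∑ σ : Fin 4, G y₀ ρ σ * p s₀ ρ * p s₀ σ) + W y₀ = 0)
    (a b c : ℝ)
    (hav : a = g y₀ 0 0) (hbv : b = g y₀ 0 1) (hcv : c = g y₀ 1 1)
    (ha : a ≠ 0) (hdet : 0 < b ^ 2 - a * c)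
    (hpos : 0 < (p s₀ 0) ^ 2 + W y₀ * a)
    (ε : ℝ) (hε : ε = if 0 < deriv (fun t => x t 1) s₀ then 1 else -1)
    (Ψ : ℝ × ℝ → ℝ)
    (hΨ : ∀ y, Ψ y = -ε * (g y 0 1 / g y 0 0) * p s₀ 0
        + (1 / g y 0 0) * Real.sqrt ((g y 0 1) ^ 2 - g y 0 0 * g y 1 1)
          * Real.sqrt ((p s₀ 0) ^ 2 + W y * g y 0 0)) :
    deriv (fun t => x t 1) s₀ ≠ 0 ∧
    ∀ μ : Fin 4, HasDerivAt (deriv (fun t => x t μ))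
      (-(Real.sqrt ((p s₀ 0) ^ 2 + W y₀ * a) / Real.sqrt (b ^ 2 - a * c)) *
        (G y₀ μ 2 * pd1 Ψ y₀ + G y₀ μ 3 * pd2 Ψ y₀)) s₀ := by
  have hGd : ∀ i j, DifferentiableAt ℝ (fun z => G z i j) y₀ := fun i j =>
    ((hGC1 i j).differentiable one_ne_zero).differentiableAt
  set X := G y₀ *ᵥ p s₀
  have hvel : ∀ μ, HasDerivAt (fun t => x t μ) (X μ) s₀ := fun μ => by
    simpa [← hy₀, X, mulVec, dotProduct] using hx s₀ μ
  have hX2 : X 2 = 0 := (hvel 2).deriv.symm.trans hx2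
  have hX3 : X 3 = 0 := (hvel 3).deriv.symm.trans hx3
  rw [(hvel 1).deriv] at hε ⊢
  have hp0X : p s₀ 0 = a * X 0 + b * X 1 := by
    rw [hav, hbv, hg]
    exact apply_zero_eq_of_mulVec_two_three_eq_zero (hGinv y₀) hX2 hX3
  have hWX : W y₀ = -(a * X 0 ^ 2 + 2 * b * X 0 * X 1 + c * X 1 ^ 2) := by
    rw [hav, hbv, hcv, hg,
      ← sum_mul_mul_eq_of_mulVec_two_three_eq_zero (hGinv y₀) (hGsymm y₀) hX2 hX3]
    linarith
  have hX1 : X 1 ≠ 0 := by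
    intro h
    have : p s₀ 0 ^ 2 + W y₀ * a = 0 := by rw [hp0X, hWX, h]; ring
    linarith
  have hε2 : ε ^ 2 = 1 := by rw [hε]; split_ifs <;> norm_num
  have hεX : 0 < ε * X 1 := hε ▸ ite_pos_one_neg_one_mul_pos hX1
  have hrate : √(p s₀ 0 ^ 2 + W y₀ * a) / √(b ^ 2 - a * c) = ε * X 1 := by
    rw [sqrt_sq_add_mul_eq hdet.le hp0X hWX hε2 hεX.le,
      mul_div_cancel_right₀ _ (Real.sqrt_pos.2 hdet).ne']
  subst hav hbv hcv hy₀
  have hpdot := momentum_rate_eq_neg_mul_fderiv_potential hGd hGsymm (hGinv _) hg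
    (hWC1.differentiable one_ne_zero _) hX2 hX3 hp0X hWX ha hdet hε2 hεX hΨ
  refine ⟨hX1, fun μ => ?_⟩
  convert hasDerivAt_deriv_of_hasDerivAt_two_three_zero hGd hx (hX2 ▸ hvel 2) (hX3 ▸ hvel 3)
    (hp0 s₀) (hp1 s₀) ((hp2 s₀).congr_deriv (hpdot (1, 0))) ((hp3 s₀).congr_deriv (hpdot (0, 1))) μ
    using 1
  rw [hrate, pd1, pd2]
  ring
end

section
/- Let g be a real symmetric 4×4 matrix such that there exists an invertible real 4×4 matrix P with Pᵀ g P = diag(−1, 1, 1, 1) (Lorentzian signature (−+++)). Suppose the upper-left 2×2 block satisfies g₀₀ g₁₁ − g₀₁² < 0. Then g is invertible and the 2×2 submatrix of g⁻¹ formed by rows and columns with indices in {2, 3} is positive definite. -/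
/-!
For `y ≠ 0` put `v = (0, 0, y₀, y₁)` and `w = g⁻¹ v`; the quadratic form of the `{2,3}` block
of `g⁻¹` at `y` is `vᵀ g⁻¹ v = wᵀ g w`. As `(g w)₀ = (g w)₁ = 0`, the vector `w` is
`g`-orthogonal to the span of `e₀, e₁`, which contains a timelike vector because the `{0,1}`
block of `g` has negative determinant. In signature `(−+++)` a nonzero vector orthogonal to a
timelike one is spacelike (reverse Cauchy–Schwarz), so `wᵀ g w > 0`.
-/

open Matrix

def minkowskiMetric (n : ℕ) : Matrix (Fin (n + 1)) (Fin (n + 1)) ℝ :=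
  diagonal (Fin.cons (-1) 1)

theorem minkowskiMetric_three :
    minkowskiMetric 3 = (diagonal ![-1, 1, 1, 1] : Matrix (Fin 4) (Fin 4) ℝ) := by
  rw [minkowskiMetric]
  congr 1
  ext i
  fin_cases i <;> rfl

theorem dotProduct_minkowskiMetric_mulVec {n : ℕ} (x y : Fin (n + 1) → ℝ) :
    x ⬝ᵥ minkowskiMetric n *ᵥ y = -(x 0 * y 0) + ∑ i : Fin n, x i.succ * y i.succ := by
  simp [minkowskiMetric, dotProduct, Fin.sum_univ_succ, mulVec_diagonal]

theorem minkowskiMetric_pos_of_orthogonal_timelike {n : ℕ} {a b : Fin (n + 1) → ℝ}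
    (ha : a ⬝ᵥ minkowskiMetric n *ᵥ a < 0) (hab : a ⬝ᵥ minkowskiMetric n *ᵥ b = 0)
    (hb : b ≠ 0) : 0 < b ⬝ᵥ minkowskiMetric n *ᵥ b := by
  rw [dotProduct_minkowskiMetric_mulVec] at ha hab ⊢
  simp only [← sq] at ha ⊢
  set A := ∑ i : Fin n, a i.succ ^ 2
  set B := ∑ i : Fin n, b i.succ ^ 2
  have hab' : a 0 * b 0 = ∑ i : Fin n, a i.succ * b i.succ := by linarith
  have ha0 : a 0 ≠ 0 := fun h => by
    have : 0 ≤ A := by positivity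
    simp only [h] at ha
    linarith
  obtain hB | hB := (show 0 ≤ B by positivity).lt_or_eq
  · have : a 0 ^ 2 * b 0 ^ 2 < a 0 ^ 2 * B := calc
      a 0 ^ 2 * b 0 ^ 2 = (∑ i : Fin n, a i.succ * b i.succ) ^ 2 := by rw [← hab']; ring
      _ ≤ A * B := Finset.sum_mul_sq_le_sq_mul_sq _ _ _
      _ < a 0 ^ 2 * B := mul_lt_mul_of_pos_right (by linarith) hB
    linarith [lt_of_mul_lt_mul_left this (sq_nonneg (a 0))]
  · have hb' : ∀ i : Fin n, b i.succ = 0 := fun i => by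
      simpa using (Finset.sum_eq_zero_iff_of_nonneg (fun i _ => sq_nonneg (b i.succ))).1 hB.symm i
    have hb0 : b 0 = 0 := by
      simp only [hb', mul_zero, Finset.sum_const_zero] at hab'
      exact (mul_eq_zero.1 hab').resolve_left ha0
    exact absurd (funext fun i => Fin.cases hb0 hb' i) hb

section Congruence

variable {ι : Type*} [Fintype ι] [DecidableEq ι]

theorem dotProduct_mulVec_eq_congruence {g P : Matrix ι ι ℝ} (hP : IsUnit P.det) (x y : ι → ℝ) :
    x ⬝ᵥ g *ᵥ y = (P⁻¹ *ᵥ x) ⬝ᵥ (Pᵀ * g * P) *ᵥ (P⁻¹ *ᵥ y) := by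
  rw [← mulVec_mulVec, ← mulVec_mulVec, mulVec_mulVec (M := P), mul_nonsing_inv P hP,
    one_mulVec, dotProduct_mulVec (P⁻¹ *ᵥ x), vecMul_transpose, mulVec_mulVec,
    mul_nonsing_inv P hP, one_mulVec]

theorem isUnit_det_of_congruence {g P Q : Matrix ι ι ℝ} (h : Pᵀ * g * P = Q)
    (hQ : IsUnit Q.det) : IsUnit g.det := by
  rw [← h, det_mul, det_mul] at hQ
  exact isUnit_of_mul_isUnit_right (isUnit_of_mul_isUnit_left hQ)

end Congruence

theorem pos_of_orthogonal_timelike_of_congruent_minkowskiMetric {n : ℕ}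
    {g P : Matrix (Fin (n + 1)) (Fin (n + 1)) ℝ} (hP : IsUnit P.det)
    (hg : Pᵀ * g * P = minkowskiMetric n) {u w : Fin (n + 1) → ℝ}
    (hu : u ⬝ᵥ g *ᵥ u < 0) (huw : u ⬝ᵥ g *ᵥ w = 0) (hw : w ≠ 0) :
    0 < w ⬝ᵥ g *ᵥ w := by
  rw [dotProduct_mulVec_eq_congruence hP, hg] at hu huw ⊢
  refine minkowskiMetric_pos_of_orthogonal_timelike hu huw fun h => hw ?_
  rw [← one_mulVec w, ← mul_nonsing_inv P hP, ← mulVec_mulVec, h, mulVec_zero]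

theorem exists_neg_of_mul_sub_sq_neg {a b c : ℝ} (h : a * c - b ^ 2 < 0) :
    ∃ x y : ℝ, a * x ^ 2 + 2 * b * x * y + c * y ^ 2 < 0 := by
  by_contra! hpos
  have := discrim_le_zero (a := a) (b := 2 * b) (c := c) fun x => by
    simpa [sq, mul_assoc] using hpos x 1
  rw [discrim] at this
  nlinarith

theorem exists_timelike_of_det_block_neg {g : Matrix (Fin 4) (Fin 4) ℝ} (hsymm : g.IsSymm)
    (hblock : g 0 0 * g 1 1 - g 0 1 ^ 2 < 0) :
    ∃ x y : ℝ, ![x, y, 0, 0] ⬝ᵥ g *ᵥ ![x, y, 0, 0] < 0 := by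
  obtain ⟨x, y, hxy⟩ := exists_neg_of_mul_sub_sq_neg hblock
  refine ⟨x, y, lt_of_eq_of_lt ?_ hxy⟩
  simp [dotProduct, mulVec, Fin.sum_univ_four, hsymm.apply 0 1]
  ring

theorem dotProduct_submatrix_two_three_mulVec (A : Matrix (Fin 4) (Fin 4) ℝ) (y : Fin 2 → ℝ) :
    y ⬝ᵥ A.submatrix ![2, 3] ![2, 3] *ᵥ y = ![0, 0, y 0, y 1] ⬝ᵥ A *ᵥ ![0, 0, y 0, y 1] := by
  simp [dotProduct, mulVec, Fin.sum_univ_four, Fin.sum_univ_two]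

/-- For a Lorentzian metric of signature `(−+++)` whose `t`-`φ` block satisfies
`g₀₀ g₁₁ − g₀₁² < 0`, the metric is invertible and the `{2,3}`-block of the
inverse metric is positive definite. -/
theorem stmt7 (g : Matrix (Fin 4) (Fin 4) ℝ) (hsymm : g.IsSymm)
    (hsig : ∃ P : Matrix (Fin 4) (Fin 4) ℝ, IsUnit P.det ∧
      Pᵀ * g * P = Matrix.diagonal ![-1, 1, 1, 1])
    (hblock : g 0 0 * g 1 1 - (g 0 1) ^ 2 < 0) :
    IsUnit g.det ∧
      ((g⁻¹).submatrix (![2, 3] : Fin 2 → Fin 4) (![2, 3] : Fin 2 → Fin 4)).PosDef := by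
  obtain ⟨P, hP, hg⟩ := hsig
  rw [← minkowskiMetric_three] at hg
  have hdet : IsUnit g.det := isUnit_det_of_congruence hg (by simp [minkowskiMetric])
  obtain ⟨x, y, hu⟩ := exists_timelike_of_det_block_neg hsymm hblock
  refine ⟨hdet, posDef_iff_dotProduct_mulVec.2
    ⟨((isHermitian_iff_isSymm.2 hsymm).inv).submatrix _, fun z hz => ?_⟩⟩
  set v : Fin 4 → ℝ := ![0, 0, z 0, z 1]
  have hgv : g *ᵥ g⁻¹ *ᵥ v = v := by rw [mulVec_mulVec, mul_nonsing_inv g hdet, one_mulVec]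
  have huv : ![x, y, 0, 0] ⬝ᵥ g *ᵥ g⁻¹ *ᵥ v = 0 := by
    simp [hgv, v, dotProduct, Fin.sum_univ_four]
  have hv : g⁻¹ *ᵥ v ≠ 0 := fun h => hz <| by
    have : v = 0 := by rw [← hgv, h, mulVec_zero]
    ext i
    fin_cases i
    exacts [congrFun this 2, congrFun this 3]
  have hpos := pos_of_orthogonal_timelike_of_congruent_minkowskiMetric hP hg hu huv hv
  rw [hgv] at hpos
  rwa [star_trivial, dotProduct_submatrix_two_three_mulVec, dotProduct_comm]
end

section
/- Fix r_h ∈ ℝ, ω_0 > 0, m > 0, c_h > 0 and let a, b, c, w : ℝ → ℝ. Assume that for all r in some right-neighbourhood of r_h: a(r) ≠ 0, b(r)² − a(r) c(r) > 0, and ω_0² + w(r)² a(r) ≥ m; and assume that as r → r_h from the right: b(r)² − a(r) c(r) → 0, c(r) → c_h, and b and w are bounded. Define R_±(r) = ±(b(r)/a(r)) ω_0 + (1/a(r)) √(b(r)² − a(r) c(r)) √(ω_0² + w(r)² a(r)). Then R_±(r) ≠ 0 for all r sufficiently close to r_h from the right, and 1/R_±(r) ∓ b(r)/(c(r) ω_0)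 → 0 as r → r_h from the right (for both choices of sign). -/
/-!
With `D = b² - a c` and `X = ω₀² + w² a`, rationalising gives
`(b ω₀ + √D √X) (b ω₀ - √D √X) = a (c ω₀² - w² D)`, hence
`1 / R₊ - b / (c ω₀) = (b w² D - √D √X c ω₀) / ((c ω₀² - w² D) c ω₀)`.
Near the horizon `D → 0` while `b`, `w`, `c` and therefore `a = (b² - D) / c` and `X` stay
bounded, so the numerator tends to `0` and the denominator to `c_h² ω₀³ ≠ 0`.
`R₋` is `R₊` with `b` replaced by `-b`.
-/

open Real Filter Topology Asymptotics

noncomputable def potential (ω0 a b c w : ℝ) : ℝ :=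
  (b * ω0 + √(b ^ 2 - a * c) * √(ω0 ^ 2 + w ^ 2 * a)) / a

section Potential

variable {ω0 a b c w : ℝ}

lemma add_sqrt_mul_sub_sqrt (hD : 0 ≤ b ^ 2 - a * c) (hX : 0 ≤ ω0 ^ 2 + w ^ 2 * a) :
    (b * ω0 + √(b ^ 2 - a * c) * √(ω0 ^ 2 + w ^ 2 * a)) *
        (b * ω0 - √(b ^ 2 - a * c) * √(ω0 ^ 2 + w ^ 2 * a)) =
      a * (c * ω0 ^ 2 - w ^ 2 * (b ^ 2 - a * c)) := by
  linear_combination -√(b ^ 2 - a * c) ^ 2 * sq_sqrt hX - (ω0 ^ 2 + w ^ 2 * a) * sq_sqrt hD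

lemma potential_ne_zero (ha : a ≠ 0) (hD : 0 ≤ b ^ 2 - a * c) (hX : 0 ≤ ω0 ^ 2 + w ^ 2 * a)
    (hE : c * ω0 ^ 2 - w ^ 2 * (b ^ 2 - a * c) ≠ 0) : potential ω0 a b c w ≠ 0 := by
  refine div_ne_zero (fun h => ?_) ha
  have := add_sqrt_mul_sub_sqrt hD hX
  rw [h, zero_mul] at this
  exact mul_ne_zero ha hE this.symm

lemma one_div_potential_sub_div (ha : a ≠ 0) (hc : c ≠ 0) (hω0 : ω0 ≠ 0)
    (hD : 0 ≤ b ^ 2 - a * c) (hX : 0 ≤ ω0 ^ 2 + w ^ 2 * a)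
    (hE : c * ω0 ^ 2 - w ^ 2 * (b ^ 2 - a * c) ≠ 0) :
    1 / potential ω0 a b c w - b / (c * ω0) =
      (b * w ^ 2 * (b ^ 2 - a * c) - √(b ^ 2 - a * c) * √(ω0 ^ 2 + w ^ 2 * a) * (c * ω0)) /
        ((c * ω0 ^ 2 - w ^ 2 * (b ^ 2 - a * c)) * (c * ω0)) := by
  have hN : b * ω0 + √(b ^ 2 - a * c) * √(ω0 ^ 2 + w ^ 2 * a) ≠ 0 :=
    (div_ne_zero_iff.mp (potential_ne_zero ha hD hX hE)).1
  rw [potential, one_div_div, div_sub_div _ _ hN (mul_ne_zero hc hω0),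
    div_eq_div_iff (mul_ne_zero hN (mul_ne_zero hc hω0)) (mul_ne_zero hE (mul_ne_zero hc hω0))]
  linear_combination -(c * ω0) ^ 2 * add_sqrt_mul_sub_sqrt hD hX

end Potential

section Horizon

variable {α : Type*} {l : Filter α} {a b c w : α → ℝ} {ω0 c_h : ℝ}

lemma boundedAtFilter_of_eventually_abs_le {f : α → ℝ} {M : ℝ} (h : ∀ᶠ r in l, |f r| ≤ M) :
    BoundedAtFilter l f :=
  IsBigO.of_bound M (h.mono fun r hr => by simpa using hr)

lemma boundedAtFilter_of_tendsto_sq_sub_mul (hch : c_h ≠ 0) (hb : BoundedAtFilter l b)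
    (hdet : Tendsto (fun r => b r ^ 2 - a r * c r) l (𝓝 0)) (hc : Tendsto c l (𝓝 c_h)) :
    BoundedAtFilter l a := by
  have hquot : BoundedAtFilter l ((b * b - fun r => b r ^ 2 - a r * c r) * c⁻¹) :=
    ((hb.mul hb).add (ZeroAtFilter.boundedAtFilter hdet).neg).mul ((hc.inv₀ hch).isBigO_one ℝ)
  refine IsBigO.congr' hquot ?_ EventuallyEq.rfl
  filter_upwards [hc.eventually_ne hch] with r hr
  simp only [Pi.mul_apply, Pi.sub_apply, Pi.inv_apply]
  field_simp
  ring

theorem eventually_ne_zero_and_tendsto_one_div_potential_sub (hω0 : ω0 ≠ 0) (hch : c_h ≠ 0)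
    (hcond : ∀ᶠ r in l, a r ≠ 0 ∧ 0 ≤ b r ^ 2 - a r * c r ∧ 0 ≤ ω0 ^ 2 + w r ^ 2 * a r)
    (hdet : Tendsto (fun r => b r ^ 2 - a r * c r) l (𝓝 0)) (hc : Tendsto c l (𝓝 c_h))
    (hb : BoundedAtFilter l b) (hw : BoundedAtFilter l w) :
    (∀ᶠ r in l, potential ω0 (a r) (b r) (c r) (w r) ≠ 0) ∧
      Tendsto (fun r => 1 / potential ω0 (a r) (b r) (c r) (w r) - b r / (c r * ω0)) l (𝓝 0) := by
  set D := fun r => b r ^ 2 - a r * c r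
  set X := fun r => ω0 ^ 2 + w r ^ 2 * a r
  have hX : BoundedAtFilter l X := by
    have hXeq : X = Function.const α (ω0 ^ 2) + w * w * a := by
      funext r
      simp [X, sq]
    rw [hXeq]
    exact (const_boundedAtFilter l _).add
      ((hw.mul hw).mul (boundedAtFilter_of_tendsto_sq_sub_mul hch hb hdet hc))
  have hSQ : Tendsto (fun r => √(D r) * √(X r)) l (𝓝 0) := by
    have : Tendsto (fun r => √(D r * X r)) l (𝓝 0) := by
      simpa using (ZeroAtFilter.mul_boundedAtFilter hdet hX).sqrt
    refine this.congr' ?_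
    filter_upwards [hcond] with r hr
    exact sqrt_mul hr.2.1 _
  have hnum : Tendsto (fun r => b r * w r ^ 2 * D r - √(D r) * √(X r) * (c r * ω0)) l (𝓝 0) := by
    simpa [sq, mul_assoc] using
      ((hb.mul (hw.mul hw)).mul_zeroAtFilter hdet).sub (hSQ.mul (hc.mul_const ω0))
  have hE : Tendsto (fun r => c r * ω0 ^ 2 - w r ^ 2 * D r) l (𝓝 (c_h * ω0 ^ 2)) := by
    simpa [sq] using (hc.mul_const _).sub ((hw.mul hw).mul_zeroAtFilter hdet)
  have hE0 : c_h * ω0 ^ 2 ≠ 0 := mul_ne_zero hch (pow_ne_zero 2 hω0)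
  have heq : ∀ᶠ r in l, potential ω0 (a r) (b r) (c r) (w r) ≠ 0 ∧
      1 / potential ω0 (a r) (b r) (c r) (w r) - b r / (c r * ω0) =
        (b r * w r ^ 2 * D r - √(D r) * √(X r) * (c r * ω0)) /
          ((c r * ω0 ^ 2 - w r ^ 2 * D r) * (c r * ω0)) := by
    filter_upwards [hcond, hc.eventually_ne hch, hE.eventually_ne hE0]
      with r ⟨har, hDr, hXr⟩ hcr hEr
    exact ⟨potential_ne_zero har hDr hXr hEr, one_div_potential_sub_div har hcr hω0 hDr hXr hEr⟩
  refine ⟨heq.mono fun _ h => h.1, Tendsto.congr' (heq.mono fun _ h => h.2.symm) ?_⟩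
  have := hnum.div (hE.mul (hc.mul_const ω0)) (mul_ne_zero hE0 (mul_ne_zero hch hω0))
  rw [zero_div] at this
  exact this

end Horizon

/-- Near a horizon (`b² − a c → 0`, `c → c_h > 0`), the potentials `R_±` are eventually
nonzero and `1/R_± ∓ b/(c ω₀) → 0` as `r → r_h⁺`. -/
theorem stmt8 (r_h ω0 m c_h : ℝ) (hω0 : 0 < ω0) (hm : 0 < m) (hch : 0 < c_h)
    (a b c w : ℝ → ℝ)
    (hcond : ∀ᶠ r in 𝓝[>] r_h,
      a r ≠ 0 ∧ 0 < b r ^ 2 - a r * c r ∧ m ≤ ω0 ^ 2 + w r ^ 2 * a r)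
    (hdet : Tendsto (fun r => b r ^ 2 - a r * c r) (𝓝[>] r_h) (𝓝 0))
    (hc : Tendsto c (𝓝[>] r_h) (𝓝 c_h))
    (hb : ∃ M : ℝ, ∀ᶠ r in 𝓝[>] r_h, |b r| ≤ M)
    (hw : ∃ M : ℝ, ∀ᶠ r in 𝓝[>] r_h, |w r| ≤ M)
    (Rp Rm : ℝ → ℝ)
    (hRp : ∀ r, Rp r = (b r / a r) * ω0 +
      (1 / a r) * Real.sqrt (b r ^ 2 - a r * c r) * Real.sqrt (ω0 ^ 2 + w r ^ 2 * a r))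
    (hRm : ∀ r, Rm r = -(b r / a r) * ω0 +
      (1 / a r) * Real.sqrt (b r ^ 2 - a r * c r) * Real.sqrt (ω0 ^ 2 + w r ^ 2 * a r)) :
    (∀ᶠ r in 𝓝[>] r_h, Rp r ≠ 0 ∧ Rm r ≠ 0) ∧
    Tendsto (fun r => 1 / Rp r - b r / (c r * ω0)) (𝓝[>] r_h) (𝓝 0) ∧
    Tendsto (fun r => 1 / Rm r + b r / (c r * ω0)) (𝓝[>] r_h) (𝓝 0) := by
  obtain ⟨Mb, hMb⟩ := hb
  obtain ⟨Mw, hMw⟩ := hw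
  have hRp' : Rp = fun r => potential ω0 (a r) (b r) (c r) (w r) := by
    funext r
    rw [hRp, potential]
    ring
  have hRm' : Rm = fun r => potential ω0 (a r) (-b r) (c r) (w r) := by
    funext r
    rw [hRm, potential, neg_sq]
    ring
  subst hRp' hRm'
  have hcond' : ∀ᶠ r in 𝓝[>] r_h,
      a r ≠ 0 ∧ 0 ≤ b r ^ 2 - a r * c r ∧ 0 ≤ ω0 ^ 2 + w r ^ 2 * a r :=
    hcond.mono fun r ⟨ha, hD, hX⟩ => ⟨ha, hD.le, hm.le.trans hX⟩
  have hbB := boundedAtFilter_of_eventually_abs_le hMb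
  have hwB := boundedAtFilter_of_eventually_abs_le hMw
  obtain ⟨hp_ne, hp_lim⟩ :=
    eventually_ne_zero_and_tendsto_one_div_potential_sub hω0.ne' hch.ne' hcond' hdet hc hbB hwB
  obtain ⟨hm_ne, hm_lim⟩ := eventually_ne_zero_and_tendsto_one_div_potential_sub (b := -b)
    hω0.ne' hch.ne' (by simpa only [Pi.neg_apply, neg_sq] using hcond')
    (by simpa only [Pi.neg_apply, neg_sq] using hdet) hc hbB.neg hwB
  exact ⟨hp_ne.and hm_ne, hp_lim,
    by simpa only [Pi.neg_apply, neg_div, sub_neg_eq_add] using hm_lim⟩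
end

section
/- Fix r_h ∈ ℝ, ω_0 > 0, m > 0, c_h > 0 and let a, b, c, w : ℝ → ℝ. Assume that for all r in some right-neighbourhood of r_h: a(r) < 0, b(r)² − a(r) c(r) > 0, and ω_0² + w(r)² a(r) ≥ m; and assume that as r → r_h from the right: b(r) → 0, b(r)² − a(r) c(r) → 0, c(r) → c_h, and w is bounded. Define R_±(r) = ±(b(r)/a(r)) ω_0 + (1/a(r)) √(b(r)² − a(r) c(r)) √(ω_0² + w(r)² a(r)). Then R_+(r) → −∞ and R_−(r) → −∞ as r → r_h from the right. -/
/-!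
Writing `D = b² - a c`, `E = ω₀² + w² a` and `s = ±b`, multiplication by the conjugate gives
`(s ω₀ + √D √E) (√D √E - s ω₀) = D E - b² ω₀² = a (w² D - c ω₀²)`, hence
`R_± = (w² D - c ω₀²) / (√D √E - s ω₀)`.
The numerator tends to `-c_h ω₀² < 0`. The denominator is positive, because its product with
`s ω₀ + √D √E` is positive while their sum `2 √D √E` is not negative, and it is at most
`ω₀ (√D + |b|) → 0` because `E ≤ ω₀²`.
-/

open Real Filter Topology

lemma add_mul_sqrt_sub_eq {a b c w ω0 s : ℝ} (hs : s ^ 2 = b ^ 2)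
    (hD : 0 ≤ b ^ 2 - a * c) (hE : 0 ≤ ω0 ^ 2 + w ^ 2 * a) :
    (s * ω0 + √(b ^ 2 - a * c) * √(ω0 ^ 2 + w ^ 2 * a)) *
        (√(b ^ 2 - a * c) * √(ω0 ^ 2 + w ^ 2 * a) - s * ω0) =
      a * (w ^ 2 * (b ^ 2 - a * c) - c * ω0 ^ 2) := by
  have hX : (√(b ^ 2 - a * c) * √(ω0 ^ 2 + w ^ 2 * a)) ^ 2 =
      (b ^ 2 - a * c) * (ω0 ^ 2 + w ^ 2 * a) := by
    rw [mul_pow, sq_sqrt hD, sq_sqrt hE]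
  linear_combination hX - ω0 ^ 2 * hs

lemma sqrt_mul_sqrt_sub_pos {a b c w ω0 s : ℝ} (hs : s ^ 2 = b ^ 2) (ha : a < 0)
    (hD : 0 ≤ b ^ 2 - a * c) (hE : 0 ≤ ω0 ^ 2 + w ^ 2 * a)
    (hN : w ^ 2 * (b ^ 2 - a * c) - c * ω0 ^ 2 < 0) :
    0 < √(b ^ 2 - a * c) * √(ω0 ^ 2 + w ^ 2 * a) - s * ω0 := by
  have hprod := add_mul_sqrt_sub_eq (c := c) (w := w) (ω0 := ω0) hs hD hE
  rcases pos_and_pos_or_neg_and_neg_of_mul_pos (hprod ▸ mul_pos_of_neg_of_neg ha hN) with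
    h | h
  · exact h.2
  · nlinarith [mul_nonneg (sqrt_nonneg (b ^ 2 - a * c)) (sqrt_nonneg (ω0 ^ 2 + w ^ 2 * a))]

lemma potential_eq_div {a b c w ω0 s : ℝ} (hs : s ^ 2 = b ^ 2) (ha : a < 0)
    (hD : 0 ≤ b ^ 2 - a * c) (hE : 0 ≤ ω0 ^ 2 + w ^ 2 * a)
    (hN : w ^ 2 * (b ^ 2 - a * c) - c * ω0 ^ 2 < 0) :
    s / a * ω0 + 1 / a * √(b ^ 2 - a * c) * √(ω0 ^ 2 + w ^ 2 * a) =
      (w ^ 2 * (b ^ 2 - a * c) - c * ω0 ^ 2) /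
        (√(b ^ 2 - a * c) * √(ω0 ^ 2 + w ^ 2 * a) - s * ω0) := by
  rw [mul_assoc, show ∀ X : ℝ, s / a * ω0 + 1 / a * X = (s * ω0 + X) / a by intro; ring,
    div_eq_div_iff ha.ne (sqrt_mul_sqrt_sub_pos hs ha hD hE hN).ne']
  linear_combination add_mul_sqrt_sub_eq (c := c) (w := w) (ω0 := ω0) hs hD hE

lemma sqrt_mul_sqrt_sub_le {a b c w ω0 s : ℝ} (hs : s ^ 2 = b ^ 2) (hω0 : 0 ≤ ω0)
    (ha : a ≤ 0) :
    √(b ^ 2 - a * c) * √(ω0 ^ 2 + w ^ 2 * a) - s * ω0 ≤ ω0 * (√(b ^ 2 - a * c) + |b|) := by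
  have hsqrtE : √(ω0 ^ 2 + w ^ 2 * a) ≤ ω0 :=
    sqrt_le_iff.mpr ⟨hω0, by nlinarith [sq_nonneg w]⟩
  have hsb : -s ≤ |b| := (neg_le_abs s).trans (sq_eq_sq_iff_abs_eq_abs _ _ |>.mp hs).le
  nlinarith [sqrt_nonneg (b ^ 2 - a * c)]

lemma Filter.Tendsto.div_nhdsGT_zero_of_neg {α : Type*} {l : Filter α} {f g : α → ℝ} {C : ℝ}
    (hf : Tendsto f l (𝓝 C)) (hC : C < 0) (hg : Tendsto g l (𝓝[>] 0)) :
    Tendsto (fun x => f x / g x) l atBot :=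
  hf.neg_mul_atTop hC hg.inv_tendsto_nhdsGT_zero

section Potential

variable {α : Type*} {l : Filter α} {a b c w s : α → ℝ} {ω0 c_h : ℝ}

lemma tendsto_sq_mul_nhds_zero {D : α → ℝ} (hw : ∃ M : ℝ, ∀ᶠ x in l, |w x| ≤ M)
    (hD : Tendsto D l (𝓝 0)) : Tendsto (fun x => w x ^ 2 * D x) l (𝓝 0) := by
  obtain ⟨M, hM⟩ := hw
  refine Tendsto.zero_mul_isBoundedUnder_le hD ?_ |>.congr fun x => mul_comm _ _
  exact isBoundedUnder_of_eventually_le (a := M ^ 2) <| hM.mono fun x hx => by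
    simpa using sq_le_sq' (neg_le_of_abs_le hx) (le_of_abs_le hx)

theorem tendsto_potential_atBot (hω0 : 0 < ω0) (hch : 0 < c_h) (hs : ∀ x, s x ^ 2 = b x ^ 2)
    (ha : ∀ᶠ x in l, a x < 0) (hDnn : ∀ᶠ x in l, 0 ≤ b x ^ 2 - a x * c x)
    (hE : ∀ᶠ x in l, 0 ≤ ω0 ^ 2 + w x ^ 2 * a x)
    (hb : Tendsto b l (𝓝 0)) (hD : Tendsto (fun x => b x ^ 2 - a x * c x) l (𝓝 0))
    (hc : Tendsto c l (𝓝 c_h)) (hw : ∃ M : ℝ, ∀ᶠ x in l, |w x| ≤ M) :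
    Tendsto (fun x => s x / a x * ω0 +
      1 / a x * √(b x ^ 2 - a x * c x) * √(ω0 ^ 2 + w x ^ 2 * a x)) l atBot := by
  have hN : Tendsto (fun x => w x ^ 2 * (b x ^ 2 - a x * c x) - c x * ω0 ^ 2) l
      (𝓝 (-(c_h * ω0 ^ 2))) := by
    simpa using (tendsto_sq_mul_nhds_zero hw hD).sub (hc.mul_const (ω0 ^ 2))
  have hNneg := hN.eventually_lt_const (neg_neg_of_pos (by positivity))
  have hQ : Tendsto (fun x => √(b x ^ 2 - a x * c x) * √(ω0 ^ 2 + w x ^ 2 * a x) - s x * ω0)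
      l (𝓝[>] 0) := by
    have hpos : ∀ᶠ x in l,
        0 < √(b x ^ 2 - a x * c x) * √(ω0 ^ 2 + w x ^ 2 * a x) - s x * ω0 := by
      filter_upwards [ha, hDnn, hE, hNneg] with x hax hDx hEx hNx
      exact sqrt_mul_sqrt_sub_pos (hs x) hax hDx hEx hNx
    have hbound : Tendsto (fun x => ω0 * (√(b x ^ 2 - a x * c x) + |b x|)) l (𝓝 0) := by
      simpa using ((continuous_sqrt.tendsto 0).comp hD |>.add hb.abs).const_mul ω0
    refine tendsto_nhdsWithin_iff.mpr
      ⟨tendsto_of_tendsto_of_tendsto_of_le_of_le' tendsto_const_nhds hbound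
        (hpos.mono fun x => le_of_lt) ?_, hpos⟩
    filter_upwards [ha] with x hax using sqrt_mul_sqrt_sub_le (hs x) hω0.le hax.le
  refine (hN.div_nhdsGT_zero_of_neg (neg_neg_of_pos (by positivity)) hQ).congr' ?_
  filter_upwards [ha, hDnn, hE, hNneg] with x hax hDx hEx hNx
  exact (potential_eq_div (hs x) hax hDx hEx hNx).symm

end Potential

/-- At a non-rotating horizon (`b → 0`, `b² − a c → 0`, `c → c_h > 0`, `a < 0`)
both potentials `R_±` tend to `−∞` as `r → r_h⁺`. -/
theorem stmt9 (r_h ω0 m c_h : ℝ) (hω0 : 0 < ω0) (hm : 0 < m) (hch : 0 < c_h)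
    (a b c w : ℝ → ℝ)
    (hcond : ∀ᶠ r in 𝓝[>] r_h,
      a r < 0 ∧ 0 < b r ^ 2 - a r * c r ∧ m ≤ ω0 ^ 2 + w r ^ 2 * a r)
    (hb : Tendsto b (𝓝[>] r_h) (𝓝 0))
    (hdet : Tendsto (fun r => b r ^ 2 - a r * c r) (𝓝[>] r_h) (𝓝 0))
    (hc : Tendsto c (𝓝[>] r_h) (𝓝 c_h))
    (hw : ∃ M : ℝ, ∀ᶠ r in 𝓝[>] r_h, |w r| ≤ M)
    (Rp Rm : ℝ → ℝ)
    (hRp : ∀ r, Rp r = (b r / a r) * ω0 +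
      (1 / a r) * Real.sqrt (b r ^ 2 - a r * c r) * Real.sqrt (ω0 ^ 2 + w r ^ 2 * a r))
    (hRm : ∀ r, Rm r = -(b r / a r) * ω0 +
      (1 / a r) * Real.sqrt (b r ^ 2 - a r * c r) * Real.sqrt (ω0 ^ 2 + w r ^ 2 * a r)) :
    Tendsto Rp (𝓝[>] r_h) atBot ∧ Tendsto Rm (𝓝[>] r_h) atBot := by
  have ha := hcond.mono fun r hr => hr.1
  have hD := hcond.mono fun r hr => hr.2.1.le
  have hE := hcond.mono fun r hr => hm.le.trans hr.2.2
  constructor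
  · rw [funext hRp]
    exact tendsto_potential_atBot hω0 hch (fun _ => rfl) ha hD hE hb hdet hc hw
  · simp only [funext hRm, ← neg_div]
    exact tendsto_potential_atBot hω0 hch (fun _ => neg_sq _) ha hD hE hb hdet hc hw
end

section
/- Fix r_h ∈ ℝ, ω_0 > 0, m > 0, c_h > 0, b_h ≠ 0 and let a, b, c, w : ℝ → ℝ. Assume that for all r in some right-neighbourhood of r_h: a(r) ≠ 0, b(r)² − a(r) c(r) > 0, and ω_0² + w(r)² a(r) ≥ m; and assume that as r → r_h from the right: b(r) → b_h, b(r)² − a(r) c(r) → 0, c(r) → c_h, and w is bounded. Define R_±(r) = ±(b(r)/a(r)) ω_0 + (1/a(r)) √(b(r)² − a(r) c(r)) √(ω_0² + w(r)² a(r)). Then, as r → r_h from the right, R_+(r) → c_h ω_0 / b_h and R_−(r) → −c_h ω_0 / b_h; in particular both potentials tend to finite nonzero limits that are equal in magnitude and opposite in sign. -/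
/-!
Since `b² − a c → 0` while `b → b_h` and `c → c_h > 0`, the metric component `a` tends to the
nonzero limit `b_h² / c_h`. Hence `(b / a) ω₀ → c_h ω₀ / b_h`, while the square-root term is
`(1 / a) √(b² − a c)`, which tends to `0`, times `√(ω₀² + w² a)`, which stays bounded because `w` is
bounded and `a` converges.
-/

open Real Filter Topology

section

variable {α : Type*} {l : Filter α}

theorem tendsto_of_tendsto_sq_sub_mul {a b c : α → ℝ} {b₀ c₀ : ℝ} (hc₀ : c₀ ≠ 0)
    (hb : Tendsto b l (𝓝 b₀)) (hc : Tendsto c l (𝓝 c₀))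
    (hdet : Tendsto (fun x => b x ^ 2 - a x * c x) l (𝓝 0)) :
    Tendsto a l (𝓝 (b₀ ^ 2 / c₀)) := by
  have hac : Tendsto (fun x => a x * c x) l (𝓝 (b₀ ^ 2)) := by
    simpa using (hb.pow 2).sub hdet
  refine (hac.div hc hc₀).congr' ?_
  filter_upwards [hc.eventually_ne hc₀] with x hx
  exact mul_div_cancel_right₀ (a x) hx

theorem isBoundedUnder_norm_sqrt_add_sq_mul {a w : α → ℝ} (k M : ℝ)
    (hw : ∀ᶠ x in l, |w x| ≤ M) (ha : IsBoundedUnder (· ≤ ·) l fun x => ‖a x‖) :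
    IsBoundedUnder (· ≤ ·) l fun x => ‖√(k + w x ^ 2 * a x)‖ := by
  obtain ⟨A, hA⟩ := ha
  refine isBoundedUnder_of_eventually_le (a := √(k + M ^ 2 * A)) ?_
  filter_upwards [hw, hA] with x hwx hax
  have hw2 : w x ^ 2 ≤ M ^ 2 := sq_le_sq' (abs_le.mp hwx).1 (abs_le.mp hwx).2
  rw [Real.norm_of_nonneg (Real.sqrt_nonneg _)]
  refine Real.sqrt_le_sqrt ?_
  calc k + w x ^ 2 * a x ≤ k + w x ^ 2 * ‖a x‖ := by gcongr; exact Real.le_norm_self _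
    _ ≤ k + M ^ 2 * A := by gcongr; exact hax

end

theorem stmt10_general (r_h ω0 c_h b_h : ℝ) (hω0 : 0 < ω0) (hch : 0 < c_h)
    (hbh : b_h ≠ 0)
    (a b c w : ℝ → ℝ)
    (hb : Tendsto b (𝓝[>] r_h) (𝓝 b_h))
    (hdet : Tendsto (fun r => b r ^ 2 - a r * c r) (𝓝[>] r_h) (𝓝 0))
    (hc : Tendsto c (𝓝[>] r_h) (𝓝 c_h))
    (hw : ∃ M : ℝ, ∀ᶠ r in 𝓝[>] r_h, |w r| ≤ M)
    (Rp Rm : ℝ → ℝ)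
    (hRp : ∀ r, Rp r = (b r / a r) * ω0 +
      (1 / a r) * Real.sqrt (b r ^ 2 - a r * c r) * Real.sqrt (ω0 ^ 2 + w r ^ 2 * a r))
    (hRm : ∀ r, Rm r = -(b r / a r) * ω0 +
      (1 / a r) * Real.sqrt (b r ^ 2 - a r * c r) * Real.sqrt (ω0 ^ 2 + w r ^ 2 * a r)) :
    Tendsto Rp (𝓝[>] r_h) (𝓝 (c_h * ω0 / b_h)) ∧
    Tendsto Rm (𝓝[>] r_h) (𝓝 (-(c_h * ω0 / b_h))) ∧
    c_h * ω0 / b_h ≠ 0 := by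
  obtain ⟨M, hM⟩ := hw
  have ha := tendsto_of_tendsto_sq_sub_mul hch.ne' hb hc hdet
  have ha₀ : b_h ^ 2 / c_h ≠ 0 := by positivity
  have hfirst : Tendsto (fun r => b r / a r * ω0) (𝓝[>] r_h) (𝓝 (c_h * ω0 / b_h)) := by
    rw [show c_h * ω0 / b_h = b_h / (b_h ^ 2 / c_h) * ω0 by field_simp]
    exact (hb.div ha ha₀).mul_const ω0
  have hvanish : Tendsto (fun r => 1 / a r * √(b r ^ 2 - a r * c r)) (𝓝[>] r_h) (𝓝 0) := by
    simpa using ((tendsto_const_nhds (x := (1 : ℝ))).div ha ha₀).mul hdet.sqrt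
  have hsecond := hvanish.zero_mul_isBoundedUnder_le
    (isBoundedUnder_norm_sqrt_add_sq_mul (ω0 ^ 2) M hM ha.norm.isBoundedUnder_le)
  refine ⟨?_, ?_, by positivity⟩
  · rw [funext hRp]
    simpa using hfirst.add hsecond
  · rw [funext hRm]
    simpa using hfirst.neg.add hsecond

/-- At a rotating horizon (`b → b_h ≠ 0`, `b² − a c → 0`, `c → c_h > 0`) the potentials
tend to finite nonzero limits `±c_h ω₀/b_h` of equal magnitude and opposite sign. -/
theorem stmt10 (r_h ω0 m c_h b_h : ℝ) (hω0 : 0 < ω0) (hm : 0 < m) (hch : 0 < c_h)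
    (hbh : b_h ≠ 0)
    (a b c w : ℝ → ℝ)
    (hcond : ∀ᶠ r in 𝓝[>] r_h,
      a r ≠ 0 ∧ 0 < b r ^ 2 - a r * c r ∧ m ≤ ω0 ^ 2 + w r ^ 2 * a r)
    (hb : Tendsto b (𝓝[>] r_h) (𝓝 b_h))
    (hdet : Tendsto (fun r => b r ^ 2 - a r * c r) (𝓝[>] r_h) (𝓝 0))
    (hc : Tendsto c (𝓝[>] r_h) (𝓝 c_h))
    (hw : ∃ M : ℝ, ∀ᶠ r in 𝓝[>] r_h, |w r| ≤ M)
    (Rp Rm : ℝ → ℝ)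
    (hRp : ∀ r, Rp r = (b r / a r) * ω0 +
      (1 / a r) * Real.sqrt (b r ^ 2 - a r * c r) * Real.sqrt (ω0 ^ 2 + w r ^ 2 * a r))
    (hRm : ∀ r, Rm r = -(b r / a r) * ω0 +
      (1 / a r) * Real.sqrt (b r ^ 2 - a r * c r) * Real.sqrt (ω0 ^ 2 + w r ^ 2 * a r)) :
    Tendsto Rp (𝓝[>] r_h) (𝓝 (c_h * ω0 / b_h)) ∧
    Tendsto Rm (𝓝[>] r_h) (𝓝 (-(c_h * ω0 / b_h))) ∧
    c_h * ω0 / b_h ≠ 0 :=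
  stmt10_general r_h ω0 c_h b_h hω0 hch hbh a b c w hb hdet hc hw Rp Rm hRp hRm
end

section
/- Fix δ > 0, ω_0 ≥ 0, f > 0 and w_0 ∈ ℝ with ω_0² − w_0² f² ≥ 0, and let a, b, c, w : (0, δ) → ℝ. Assume: a(ρ) ≠ 0, b(ρ)² − a(ρ) c(ρ) > 0 and ω_0² + w(ρ)² a(ρ) ≥ 0 for all ρ; and as ρ → 0 from the right: a(ρ) → −f², b(ρ)/ρ → 0, (b(ρ)² − a(ρ) c(ρ))/ρ² → f², and w(ρ)² → w_0². Define R_±(ρ) = ±(b(ρ)/a(ρ)) ω_0 + (1/a(ρ)) √(b(ρ)² − a(ρ) c(ρ)) √(ω_0² + w(ρ)² a(ρ)). Then, as ρ → 0 from the right, R_±(ρ) → 0 and R_±(ρ)/ρ → −√(ω_0² − w_0² f²) / f (for both choices of sign). -/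
open Real Filter Topology

/-! Moving `1/ρ` under the first square root writes `R_±/ρ` as
`±(b/ρ)(ω₀/a) + (1/a) √((b² − a c)/ρ²) √(ω₀² + w² a)`, a continuous expression in quantities
with known limits; the frame-dragging term vanishes because `b = o(ρ)`, leaving
`(1/(−f²)) · f · √(ω₀² − w₀² f²)`. Multiplying back by `ρ → 0` gives `R_± → 0`. -/

theorem tendsto_zero_of_tendsto_div_self {𝕜 : Type*} [NormedField 𝕜] {l : Filter 𝕜}
    (hl : l ≤ 𝓝[≠] 0) {g : 𝕜 → 𝕜} {L : 𝕜} (h : Tendsto (fun x => g x / x) l (𝓝 L)) :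
    Tendsto g l (𝓝 0) := by
  have hprod := h.mul (tendsto_id.mono_left (hl.trans nhdsWithin_le_nhds))
  rw [mul_zero] at hprod
  refine hprod.congr' ?_
  filter_upwards [hl self_mem_nhdsWithin] with x hx
  exact div_mul_cancel₀ _ hx

theorem potential_div_eq (s ω0 a b c w : ℝ) {ρ : ℝ} (hρ : 0 ≤ ρ) :
    (s * (b / a) * ω0 + 1 / a * √(b ^ 2 - a * c) * √(ω0 ^ 2 + w ^ 2 * a)) / ρ =
      s * (b / ρ) * (ω0 / a) +
        1 / a * √((b ^ 2 - a * c) / ρ ^ 2) * √(ω0 ^ 2 + w ^ 2 * a) := by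
  rw [Real.sqrt_div' _ (sq_nonneg ρ), Real.sqrt_sq hρ]
  ring

theorem tendsto_potential_div_nhdsGT_zero (s ω0 f w0 : ℝ) (hf : 0 < f) {a b c w : ℝ → ℝ}
    (ha : Tendsto a (𝓝[>] 0) (𝓝 (-f ^ 2)))
    (hb : Tendsto (fun ρ => b ρ / ρ) (𝓝[>] 0) (𝓝 0))
    (hdet : Tendsto (fun ρ => (b ρ ^ 2 - a ρ * c ρ) / ρ ^ 2) (𝓝[>] 0) (𝓝 (f ^ 2)))
    (hw : Tendsto (fun ρ => w ρ ^ 2) (𝓝[>] 0) (𝓝 (w0 ^ 2))) :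
    Tendsto (fun ρ => (s * (b ρ / a ρ) * ω0 +
        1 / a ρ * √(b ρ ^ 2 - a ρ * c ρ) * √(ω0 ^ 2 + w ρ ^ 2 * a ρ)) / ρ) (𝓝[>] 0)
      (𝓝 (-√(ω0 ^ 2 - w0 ^ 2 * f ^ 2) / f)) := by
  have hf2 : -f ^ 2 ≠ 0 := neg_ne_zero.mpr (by positivity)
  have hsqrt_det : Tendsto (fun ρ => √((b ρ ^ 2 - a ρ * c ρ) / ρ ^ 2)) (𝓝[>] 0) (𝓝 f) := by
    simpa only [Real.sqrt_sq hf.le] using hdet.sqrt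
  have hsqrt_freq : Tendsto (fun ρ => √(ω0 ^ 2 + w ρ ^ 2 * a ρ)) (𝓝[>] 0)
      (𝓝 √(ω0 ^ 2 + w0 ^ 2 * -f ^ 2)) :=
    (tendsto_const_nhds.add (hw.mul ha)).sqrt
  have hlim : Tendsto (fun ρ => s * (b ρ / ρ) * (ω0 / a ρ) +
        1 / a ρ * √((b ρ ^ 2 - a ρ * c ρ) / ρ ^ 2) * √(ω0 ^ 2 + w ρ ^ 2 * a ρ)) (𝓝[>] 0)
      (𝓝 (s * 0 * (ω0 / -f ^ 2) + 1 / -f ^ 2 * f * √(ω0 ^ 2 + w0 ^ 2 * -f ^ 2))) :=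
    ((tendsto_const_nhds.mul hb).mul (tendsto_const_nhds.div ha hf2)).add
      (((tendsto_const_nhds.div ha hf2).mul hsqrt_det).mul hsqrt_freq)
  have hval : s * 0 * (ω0 / -f ^ 2) + 1 / -f ^ 2 * f * √(ω0 ^ 2 + w0 ^ 2 * -f ^ 2) =
      -√(ω0 ^ 2 - w0 ^ 2 * f ^ 2) / f := by
    rw [mul_zero, zero_mul, zero_add, mul_neg, ← sub_eq_add_neg]
    field_simp
  rw [hval] at hlim
  refine hlim.congr' ?_
  filter_upwards [self_mem_nhdsWithin] with ρ hρ
  exact (potential_div_eq s ω0 (a ρ) (b ρ) (c ρ) (w ρ) (le_of_lt hρ)).symm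

theorem stmt12_general (ω0 f w0 : ℝ) (hf : 0 < f)
    (a b c w : ℝ → ℝ)
    (ha : Tendsto a (𝓝[>] 0) (𝓝 (-f ^ 2)))
    (hb : Tendsto (fun ρ => b ρ / ρ) (𝓝[>] 0) (𝓝 0))
    (hdet : Tendsto (fun ρ => (b ρ ^ 2 - a ρ * c ρ) / ρ ^ 2) (𝓝[>] 0) (𝓝 (f ^ 2)))
    (hw : Tendsto (fun ρ => w ρ ^ 2) (𝓝[>] 0) (𝓝 (w0 ^ 2)))
    (Rp Rm : ℝ → ℝ)
    (hRp : ∀ ρ, Rp ρ = (b ρ / a ρ) * ω0 +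
      (1 / a ρ) * Real.sqrt (b ρ ^ 2 - a ρ * c ρ) * Real.sqrt (ω0 ^ 2 + w ρ ^ 2 * a ρ))
    (hRm : ∀ ρ, Rm ρ = -(b ρ / a ρ) * ω0 +
      (1 / a ρ) * Real.sqrt (b ρ ^ 2 - a ρ * c ρ) * Real.sqrt (ω0 ^ 2 + w ρ ^ 2 * a ρ)) :
    Tendsto Rp (𝓝[>] 0) (𝓝 0) ∧ Tendsto Rm (𝓝[>] 0) (𝓝 0) ∧
    Tendsto (fun ρ => Rp ρ / ρ) (𝓝[>] 0)
      (𝓝 (-Real.sqrt (ω0 ^ 2 - w0 ^ 2 * f ^ 2) / f)) ∧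
    Tendsto (fun ρ => Rm ρ / ρ) (𝓝[>] 0)
      (𝓝 (-Real.sqrt (ω0 ^ 2 - w0 ^ 2 * f ^ 2) / f)) := by
  have hp : Tendsto (fun ρ => Rp ρ / ρ) (𝓝[>] 0)
      (𝓝 (-√(ω0 ^ 2 - w0 ^ 2 * f ^ 2) / f)) :=
    (tendsto_potential_div_nhdsGT_zero 1 ω0 f w0 hf ha hb hdet hw).congr
      fun ρ => by rw [hRp]; ring
  have hm : Tendsto (fun ρ => Rm ρ / ρ) (𝓝[>] 0)
      (𝓝 (-√(ω0 ^ 2 - w0 ^ 2 * f ^ 2) / f)) :=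
    (tendsto_potential_div_nhdsGT_zero (-1) ω0 f w0 hf ha hb hdet hw).congr
      fun ρ => by rw [hRm]; ring
  exact ⟨tendsto_zero_of_tendsto_div_self (nhdsGT_le_nhdsNE 0) hp,
    tendsto_zero_of_tendsto_div_self (nhdsGT_le_nhdsNE 0) hm, hp, hm⟩

/-- Near a regular axis (`a → −f²`, `b/ρ → 0`, `(b² − a c)/ρ² → f²`, `w² → w₀²`),
both potentials satisfy `R_± → 0` and `R_±/ρ → −√(ω₀² − w₀² f²)/f` as `ρ → 0⁺`. -/
theorem stmt12 (δ ω0 f w0 : ℝ) (hδ : 0 < δ) (hω0 : 0 ≤ ω0) (hf : 0 < f)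
    (hfl : 0 ≤ ω0 ^ 2 - w0 ^ 2 * f ^ 2)
    (a b c w : ℝ → ℝ)
    (hcond : ∀ ρ ∈ Set.Ioo (0 : ℝ) δ,
      a ρ ≠ 0 ∧ 0 < b ρ ^ 2 - a ρ * c ρ ∧ 0 ≤ ω0 ^ 2 + w ρ ^ 2 * a ρ)
    (ha : Tendsto a (𝓝[>] 0) (𝓝 (-f ^ 2)))
    (hb : Tendsto (fun ρ => b ρ / ρ) (𝓝[>] 0) (𝓝 0))
    (hdet : Tendsto (fun ρ => (b ρ ^ 2 - a ρ * c ρ) / ρ ^ 2) (𝓝[>] 0) (𝓝 (f ^ 2)))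
    (hw : Tendsto (fun ρ => w ρ ^ 2) (𝓝[>] 0) (𝓝 (w0 ^ 2)))
    (Rp Rm : ℝ → ℝ)
    (hRp : ∀ ρ, Rp ρ = (b ρ / a ρ) * ω0 +
      (1 / a ρ) * Real.sqrt (b ρ ^ 2 - a ρ * c ρ) * Real.sqrt (ω0 ^ 2 + w ρ ^ 2 * a ρ))
    (hRm : ∀ ρ, Rm ρ = -(b ρ / a ρ) * ω0 +
      (1 / a ρ) * Real.sqrt (b ρ ^ 2 - a ρ * c ρ) * Real.sqrt (ω0 ^ 2 + w ρ ^ 2 * a ρ)) :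
    Tendsto Rp (𝓝[>] 0) (𝓝 0) ∧ Tendsto Rm (𝓝[>] 0) (𝓝 0) ∧
    Tendsto (fun ρ => Rp ρ / ρ) (𝓝[>] 0)
      (𝓝 (-Real.sqrt (ω0 ^ 2 - w0 ^ 2 * f ^ 2) / f)) ∧
    Tendsto (fun ρ => Rm ρ / ρ) (𝓝[>] 0)
      (𝓝 (-Real.sqrt (ω0 ^ 2 - w0 ^ 2 * f ^ 2) / f)) :=
  stmt12_general ω0 f w0 hf a b c w ha hb hdet hw Rp Rm hRp hRm
end

section
/- Fix m > 0 and ω_0 > 0, let U = {(r, θ) ∈ ℝ² : r > 2m, 0 < θ < π}, and define R : U → ℝ by R(r, θ) = −ω_0 r^{3/2} sin θ / √(r − 2m). Then R is differentiable on U, its gradient vanishes at a point (r, θ) ∈ U if and only if (r, θ) = (3m, π/2), and at this point ∂²R/∂r² = −√3 ω_0 / m < 0, ∂²R/∂θ² = 3√3 m ω_0 > 0, and ∂²R/∂r∂θ = 0; in particular (3m, π/2) is a nondegenerate saddle (the Hessian determinant equals −9 ω_0² < 0). -/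
/-!
The potential separates as `R(r, θ) = f(r) · (-ω₀ sin θ)` with `f(r) = r^{3/2} / √(r - 2m) > 0`
and `f'(r) = √r (r - 3m) / (r - 2m)^{3/2}`. Since `sin θ > 0` on `(0, π)`, the gradient vanishes
iff `f'(r) = 0` and `cos θ = 0`, i.e. at `(3m, π/2)`. For a separated product each second partial
derivative is a product of one-variable derivatives: `∂²R/∂r² = -ω₀ f''(3m)` with
`f''(3m) = √3 / m` (only the vanishing factor `r - 3m` of `f'` is differentiated),
`∂²R/∂θ² = ω₀ f(3m) = 3√3 m ω₀`, and `∂²R/∂r∂θ = f'(3m) · (-ω₀ cos(π/2)) = 0`.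
-/

open Real ContinuousLinearMap

section Separated

variable {𝕜 : Type*} [NontriviallyNormedField 𝕜]

theorem smul_fst_add_smul_snd_eq_zero_iff {a b : 𝕜} :
    a • fst 𝕜 𝕜 𝕜 + b • snd 𝕜 𝕜 𝕜 = 0 ↔ a = 0 ∧ b = 0 := by
  constructor
  · intro h
    exact ⟨by simpa using congr($h (1, 0)), by simpa using congr($h (0, 1))⟩
  · rintro ⟨rfl, rfl⟩
    ext <;> simp

theorem HasDerivAt.hasFDerivAt_mul_fst_snd {f g : 𝕜 → 𝕜} {f' g' x y : 𝕜}
    (hf : HasDerivAt f f' x) (hg : HasDerivAt g g' y) :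
    HasFDerivAt (fun q : 𝕜 × 𝕜 => f q.1 * g q.2)
      ((g y * f') • fst 𝕜 𝕜 𝕜 + (f x * g') • snd 𝕜 𝕜 𝕜) (x, y) := by
  have h₁ : HasFDerivAt (fun q : 𝕜 × 𝕜 => f q.1) (f' • fst 𝕜 𝕜 𝕜) (x, y) :=
    hf.comp_hasFDerivAt (f := Prod.fst) (x, y) hasFDerivAt_fst
  have h₂ : HasFDerivAt (fun q : 𝕜 × 𝕜 => g q.2) (g' • snd 𝕜 𝕜 𝕜) (x, y) :=
    hg.comp_hasFDerivAt (f := Prod.snd) (x, y) hasFDerivAt_snd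
  refine (h₁.mul h₂).congr_fderiv ?_
  ext <;> simp [mul_comm]

end Separated

theorem Real.cos_eq_zero_iff_of_mem_Icc {θ : ℝ} (hθ : θ ∈ Set.Icc 0 π) :
    cos θ = 0 ↔ θ = π / 2 := by
  rw [← arccos_eq_pi_div_two, arccos_cos hθ.1 hθ.2]

theorem Real.rpow_three_halves {r : ℝ} (hr : 0 ≤ r) : r ^ ((3 : ℝ) / 2) = r * √r := by
  rw [show (3 : ℝ) / 2 = 1 + 1 / 2 by norm_num, rpow_add' hr (by norm_num), rpow_one,
    ← sqrt_eq_rpow]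

noncomputable def radialProfile (m r : ℝ) : ℝ := r ^ ((3 : ℝ) / 2) / √(r - 2 * m)

noncomputable def radialProfileDeriv (m r : ℝ) : ℝ := √r * (r - 3 * m) / √(r - 2 * m) ^ 3

theorem hasDerivAt_radialProfile {m r : ℝ} (hr₀ : 0 < r) (hr : 2 * m < r) :
    HasDerivAt (radialProfile m) (radialProfileDeriv m r) r := by
  have hd : 0 < r - 2 * m := by linarith
  have hs : 0 < √(r - 2 * m) := sqrt_pos.2 hd
  have hnum := Real.hasDerivAt_rpow_const (p := (3 : ℝ) / 2) (Or.inl hr₀.ne')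
  have hden : HasDerivAt (fun x => √(x - 2 * m)) (1 / (2 * √(r - 2 * m))) r :=
    ((hasDerivAt_id r).sub_const (2 * m)).sqrt hd.ne'
  refine (hnum.div hden hs.ne').congr_deriv ?_
  rw [radialProfileDeriv, show (3 : ℝ) / 2 - 1 = 1 / 2 by norm_num, ← sqrt_eq_rpow,
    rpow_three_halves hr₀.le]
  field_simp
  linear_combination 3 * sq_sqrt hd.le

theorem radialProfile_pos {m r : ℝ} (hr₀ : 0 < r) (hr : 2 * m < r) : 0 < radialProfile m r :=
  div_pos (rpow_pos_of_pos hr₀ _) (sqrt_pos.2 (by linarith))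

theorem radialProfile_three_mul {m : ℝ} (hm : 0 < m) :
    radialProfile m (3 * m) = 3 * √3 * m := by
  rw [radialProfile, rpow_three_halves (by positivity), show 3 * m - 2 * m = m by ring,
    sqrt_mul (by norm_num)]
  field_simp

theorem radialProfileDeriv_eq_zero_iff {m r : ℝ} (hr₀ : 0 < r) (hr : 2 * m < r) :
    radialProfileDeriv m r = 0 ↔ r = 3 * m := by
  have : 0 < √(r - 2 * m) := sqrt_pos.2 (by linarith)
  simp [radialProfileDeriv, sqrt_ne_zero'.2 hr₀, this.ne', sub_eq_zero]

theorem deriv_deriv_radialProfile_three_mul {m : ℝ} (hm : 0 < m) :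
    deriv (deriv (radialProfile m)) (3 * m) = √3 / m := by
  have h3m : 0 < 3 * m := by linarith
  have hlocal : deriv (radialProfile m) =ᶠ[nhds (3 * m)] radialProfileDeriv m := by
    filter_upwards [Ioi_mem_nhds (show 2 * m < 3 * m by linarith)] with u hu
    exact (hasDerivAt_radialProfile (by linarith [Set.mem_Ioi.1 hu]) hu).deriv
  rw [hlocal.deriv_eq]
  have hden : HasDerivAt (fun u => √(u - 2 * m) ^ 3) _ (3 * m) :=
    (((hasDerivAt_id (3 * m)).sub_const (2 * m)).sqrt (by simp; linarith)).pow 3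
  have hfac := ((hasDerivAt_sqrt h3m.ne').div hden (by simp; ring_nf; positivity)).mul
    ((hasDerivAt_id (3 * m)).sub_const (3 * m))
  have hval : radialProfileDeriv m = fun u => √u / √(u - 2 * m) ^ 3 * (id u - 3 * m) := by
    ext u; simp [radialProfileDeriv, mul_div_right_comm]
  rw [hval]
  refine hfac.deriv.trans ?_
  simp only [Pi.div_apply, id, sub_self, mul_zero, zero_add, mul_one,
    show 3 * m - 2 * m = m by ring, sqrt_mul (show (0 : ℝ) ≤ 3 by norm_num)]
  field_simp
  linear_combination -sq_sqrt hm.le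

noncomputable def vacuumPotential (m ω0 : ℝ) (q : ℝ × ℝ) : ℝ :=
  radialProfile m q.1 * (-ω0 * sin q.2)

theorem vacuumPotential_eq (m ω0 : ℝ) (q : ℝ × ℝ) :
    vacuumPotential m ω0 q = -ω0 * q.1 ^ ((3 : ℝ) / 2) * sin q.2 / √(q.1 - 2 * m) := by
  rw [vacuumPotential, radialProfile]
  ring

theorem hasFDerivAt_vacuumPotential {m ω0 r θ : ℝ} (hr₀ : 0 < r) (hr : 2 * m < r) :
    HasFDerivAt (vacuumPotential m ω0)
      ((-ω0 * sin θ * radialProfileDeriv m r) • fst ℝ ℝ ℝ +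
        (radialProfile m r * (-ω0 * cos θ)) • snd ℝ ℝ ℝ) (r, θ) :=
  (hasDerivAt_radialProfile hr₀ hr).hasFDerivAt_mul_fst_snd ((hasDerivAt_sin θ).const_mul (-ω0))

theorem fderiv_vacuumPotential_eq_zero_iff {m ω0 r θ : ℝ} (hm : 0 < m) (hω0 : ω0 ≠ 0)
    (hr : 2 * m < r) (hθ : θ ∈ Set.Ioo 0 π) :
    fderiv ℝ (vacuumPotential m ω0) (r, θ) = 0 ↔ (r, θ) = (3 * m, π / 2) := by
  have hr₀ : 0 < r := by linarith
  have hsin : sin θ ≠ 0 := (sin_pos_of_pos_of_lt_pi hθ.1 hθ.2).ne'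
  rw [(hasFDerivAt_vacuumPotential hr₀ hr).fderiv, smul_fst_add_smul_snd_eq_zero_iff,
    Prod.mk.injEq, ← radialProfileDeriv_eq_zero_iff hr₀ hr,
    ← cos_eq_zero_iff_of_mem_Icc (Set.Ioo_subset_Icc_self hθ)]
  simp [hω0, hsin, (radialProfile_pos hr₀ hr).ne']

theorem deriv_deriv_vacuumPotential_fst {m ω0 : ℝ} (hm : 0 < m) :
    deriv (fun u => deriv (fun v => vacuumPotential m ω0 (v, π / 2)) u) (3 * m) =
      -√3 * ω0 / m := by
  simp only [vacuumPotential, deriv_mul_const_field', deriv_deriv_radialProfile_three_mul hm,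
    sin_pi_div_two]
  ring

theorem deriv_deriv_vacuumPotential_snd {m ω0 : ℝ} (hm : 0 < m) :
    deriv (fun u => deriv (fun v => vacuumPotential m ω0 (3 * m, v)) u) (π / 2) =
      3 * √3 * m * ω0 := by
  simp only [vacuumPotential, deriv_const_mul_field', Real.deriv_sin, deriv_cos',
    radialProfile_three_mul hm, sin_pi_div_two]
  ring

theorem deriv_deriv_vacuumPotential_fst_snd (m ω0 r : ℝ) :
    deriv (fun u => deriv (fun v => vacuumPotential m ω0 (u, v)) (π / 2)) r = 0 := by
  simp [vacuumPotential, Real.deriv_sin]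

/-- On the Schwarzschild domain of outer communication the vacuum potential
`R(r,θ) = −ω₀ r^{3/2} sin θ/√(r − 2m)` is differentiable, its gradient vanishes
exactly at `(3m, π/2)`, and there the second derivatives are
`∂²R/∂r² = −√3 ω₀/m < 0`, `∂²R/∂θ² = 3√3 m ω₀ > 0`, `∂²R/∂r∂θ = 0`,
so the Hessian determinant equals `−9ω₀² < 0` (a nondegenerate saddle). -/
theorem stmt15 (m ω0 : ℝ) (hm : 0 < m) (hω0 : 0 < ω0)
    (U : Set (ℝ × ℝ))
    (hU : U = {q : ℝ × ℝ | 2 * m < q.1 ∧ 0 < q.2 ∧ q.2 < π})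
    (R : ℝ × ℝ → ℝ)
    (hR : ∀ q : ℝ × ℝ,
      R q = -ω0 * q.1 ^ ((3 : ℝ) / 2) * Real.sin q.2 / Real.sqrt (q.1 - 2 * m)) :
    DifferentiableOn ℝ R U ∧
    (∀ q ∈ U, fderiv ℝ R q = 0 ↔ q = (3 * m, π / 2)) ∧
    deriv (fun u => deriv (fun v => R (v, π / 2)) u) (3 * m) = -Real.sqrt 3 * ω0 / m ∧
    -Real.sqrt 3 * ω0 / m < 0 ∧
    deriv (fun u => deriv (fun v => R (3 * m, v)) u) (π / 2) = 3 * Real.sqrt 3 * m * ω0 ∧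
    0 < 3 * Real.sqrt 3 * m * ω0 ∧
    deriv (fun u => deriv (fun v => R (u, v)) (π / 2)) (3 * m) = 0 ∧
    deriv (fun u => deriv (fun v => R (v, π / 2)) u) (3 * m) *
        deriv (fun u => deriv (fun v => R (3 * m, v)) u) (π / 2) -
      (deriv (fun u => deriv (fun v => R (u, v)) (π / 2)) (3 * m)) ^ 2
      = -9 * ω0 ^ 2 ∧
    -9 * ω0 ^ 2 < 0 := by
  obtain rfl : R = vacuumPotential m ω0 :=
    funext fun q => (hR q).trans (vacuumPotential_eq m ω0 q).symm
  subst hU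
  refine ⟨?_, ?_, deriv_deriv_vacuumPotential_fst hm,
    by rw [neg_mul, neg_div, neg_lt_zero]; positivity,
    deriv_deriv_vacuumPotential_snd hm, by positivity, deriv_deriv_vacuumPotential_fst_snd _ _ _,
    ?_, by nlinarith⟩
  · rintro ⟨r, θ⟩ ⟨hr, -⟩
    exact (hasFDerivAt_vacuumPotential (by linarith) hr).differentiableAt.differentiableWithinAt
  · rintro ⟨r, θ⟩ ⟨hr, hθ⟩
    exact fderiv_vacuumPotential_eq_zero_iff hm hω0.ne' hr hθ
  · rw [deriv_deriv_vacuumPotential_fst hm, deriv_deriv_vacuumPotential_snd hm,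
      deriv_deriv_vacuumPotential_fst_snd]
    field_simp
    linear_combination -3 * ω0 ^ 2 * sq_sqrt (show (0 : ℝ) ≤ 3 by norm_num)
end

section
/- Fix ω_c > 0, r₀ > 0 and ω_0 > ω_c, let U = {(r, θ) ∈ ℝ² : r > 0, 0 < θ < π}, and define R : U → ℝ by R(r, θ) = −r sin θ · √(ω_0² − ω_c² sin²(r/r₀)). Then R is differentiable on U, and its gradient vanishes at (r, θ) ∈ U if and only if θ = π/2 and ω_c² sin(r/r₀) (sin(r/r₀) + (r/r₀) cos(r/r₀)) = ω_0². Moreover, the set of such critical points is infinite. -/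
/-!
Write `R(r, θ) = F(r) sin θ` with `F(r) = -r √c(r)`, `c(r) = ω₀² - ω_c² sin²(r/r₀) > 0`. On `U`
both `sin θ` and `F(r)` are nonzero, so `∂_θ R = 0` forces `cos θ = 0`, while `∂_r R = 0` says
`F'(r) = -(2c + r c') / (2√c) = 0`, which is the stated equation. In `x = r/r₀` its left side
vanishes at `2πn` and equals `ω_c² (1 + x) / 2` at `x = 2πn + π/4`, so by the intermediate value
theorem it attains `ω₀²` in every late period.
-/

open Real

theorem ContinuousLinearMap.eq_zero_iff_apply_inl_inr {𝕜 F : Type*} [NontriviallyNormedField 𝕜]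
    [NormedAddCommGroup F] [NormedSpace 𝕜 F] (L : 𝕜 × 𝕜 →L[𝕜] F) :
    L = 0 ↔ L (1, 0) = 0 ∧ L (0, 1) = 0 := by
  refine ⟨by rintro rfl; simp, fun ⟨h₁, h₂⟩ => ?_⟩
  apply prod_ext <;> apply ext_ring <;> simpa

section SeparableProduct

variable {𝕜 : Type*} [NontriviallyNormedField 𝕜] {f g : 𝕜 → 𝕜} {f' g' x y : 𝕜}

theorem hasFDerivAt_mul_prod (hf : HasDerivAt f f' x) (hg : HasDerivAt g g' y) :
    HasFDerivAt (fun q : 𝕜 × 𝕜 => f q.1 * g q.2)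
      (f x • g' • ContinuousLinearMap.snd 𝕜 𝕜 𝕜 + g y • f' • ContinuousLinearMap.fst 𝕜 𝕜 𝕜)
      (x, y) :=
  (hf.comp_hasFDerivAt (x, y) hasFDerivAt_fst).mul (hg.comp_hasFDerivAt (x, y) hasFDerivAt_snd)

theorem fderiv_mul_prod_eq_zero_iff (hf : HasDerivAt f f' x) (hg : HasDerivAt g g' y) :
    fderiv 𝕜 (fun q : 𝕜 × 𝕜 => f q.1 * g q.2) (x, y) = 0 ↔ f' * g y = 0 ∧ f x * g' = 0 := by
  rw [(hasFDerivAt_mul_prod hf hg).fderiv, ContinuousLinearMap.eq_zero_iff_apply_inl_inr]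
  simp [mul_comm]

end SeparableProduct

theorem Real.cos_eq_zero_iff_of_mem_Ioo {θ : ℝ} (h₀ : 0 < θ) (hπ : θ < π) :
    cos θ = 0 ↔ θ = π / 2 := by
  refine ⟨fun h => injOn_cos ⟨h₀.le, hπ.le⟩ ⟨by positivity, by linarith [pi_pos]⟩ ?_,
    fun h => h ▸ cos_pi_div_two⟩
  rw [h, cos_pi_div_two]

theorem hasDerivAt_mul_sqrt {c : ℝ → ℝ} {c' x : ℝ} (hc : HasDerivAt c c' x) (hpos : 0 < c x) :
    HasDerivAt (fun r => r * √(c r)) ((2 * c x + x * c') / (2 * √(c x))) x := by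
  refine ((hasDerivAt_id' x).mul (hc.sqrt hpos.ne')).congr_deriv ?_
  have : 0 < √(c x) := sqrt_pos.2 hpos
  field_simp
  rw [sq_sqrt hpos.le]
  ring

theorem hasDerivAt_neg_mul_sqrt_plasma (ω₀ ω_c r₀ : ℝ) (h : ω_c ^ 2 < ω₀ ^ 2) (r : ℝ) :
    HasDerivAt (fun r => -(r * √(ω₀ ^ 2 - ω_c ^ 2 * sin (r / r₀) ^ 2)))
      (-(ω₀ ^ 2 - ω_c ^ 2 * sin (r / r₀) * (sin (r / r₀) + r / r₀ * cos (r / r₀))) /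
        √(ω₀ ^ 2 - ω_c ^ 2 * sin (r / r₀) ^ 2)) r := by
  have hpos : 0 < ω₀ ^ 2 - ω_c ^ 2 * sin (r / r₀) ^ 2 := by
    nlinarith [sin_sq_le_one (r / r₀), sq_nonneg ω_c]
  have hc : HasDerivAt (fun r => ω₀ ^ 2 - ω_c ^ 2 * sin (r / r₀) ^ 2)
      (-(ω_c ^ 2 * (2 * sin (r / r₀) * (cos (r / r₀) * r₀⁻¹)))) r := by
    simpa using ((((hasDerivAt_id' r).div_const r₀).sin.fun_pow 2).const_mul (ω_c ^ 2)).const_sub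
      (ω₀ ^ 2)
  refine (hasDerivAt_mul_sqrt hc hpos).neg.congr_deriv ?_
  have : 0 < √(ω₀ ^ 2 - ω_c ^ 2 * sin (r / r₀) ^ 2) := sqrt_pos.2 hpos
  field_simp
  ring

theorem infinite_setOf_mul_sin_mul_sin_add_mul_cos_eq {a b : ℝ} (ha : 0 < a) (hb : 0 ≤ b) :
    {x : ℝ | 0 < x ∧ a * sin x * (sin x + x * cos x) = b}.Infinite := by
  refine Set.infinite_of_not_bddAbove (not_bddAbove_iff.2 fun M => ?_)
  obtain ⟨n, hn⟩ := exists_nat_gt (max M (2 * b / a))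
  set φ : ℝ → ℝ := fun x => a * sin x * (sin x + x * cos x)
  have hπ := pi_gt_three
  have hn_le : (n : ℝ) ≤ n * (2 * π) := by nlinarith [n.cast_nonneg (α := ℝ)]
  have hzero : φ (n * (2 * π)) = 0 := by
    simp [φ, by simpa using sin_add_nat_mul_two_pi 0 n]
  have hlarge : b ≤ φ (π / 4 + n * (2 * π)) := by
    have hval : φ (π / 4 + n * (2 * π)) = a * (1 + (π / 4 + n * (2 * π))) / 2 := by
      simp only [φ, sin_add_nat_mul_two_pi, cos_add_nat_mul_two_pi, sin_pi_div_four,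
        cos_pi_div_four]
      linear_combination a * (1 + (π / 4 + n * (2 * π))) / 4 * sq_sqrt (zero_le_two (α := ℝ))
    have : 2 * b < n * a := (div_lt_iff₀ ha).1 (le_max_right _ _ |>.trans_lt hn)
    rw [hval]
    nlinarith
  obtain ⟨x, ⟨hx, -⟩, hφx⟩ := intermediate_value_Icc (by linarith)
    (by fun_prop : Continuous φ).continuousOn ⟨hzero ▸ hb, hlarge⟩
  have hMn : M < n := le_max_left _ _ |>.trans_lt hn
  refine ⟨x, ⟨?_, hφx⟩, by linarith⟩
  have hn_pos : 0 < (n : ℝ) :=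
    (div_nonneg (by positivity) ha.le).trans_lt (le_max_right _ _ |>.trans_lt hn)
  linarith

/-- For the plasma density `ω_p² = ω_c² sin²(r/r₀)` on Minkowski spacetime with
`ω₀ > ω_c`, the potential `R(r,θ) = −r sin θ √(ω₀² − ω_c² sin²(r/r₀))` is
differentiable, its gradient vanishes exactly where `θ = π/2` and
`ω_c² sin(r/r₀)(sin(r/r₀) + (r/r₀) cos(r/r₀)) = ω₀²`, and the set of such
critical points is infinite. -/
theorem stmt16 (ωc r0 ω0 : ℝ) (hωc : 0 < ωc) (hr0 : 0 < r0) (hω0 : ωc < ω0)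
    (U : Set (ℝ × ℝ))
    (hU : U = {q : ℝ × ℝ | 0 < q.1 ∧ 0 < q.2 ∧ q.2 < π})
    (R : ℝ × ℝ → ℝ)
    (hR : ∀ q : ℝ × ℝ,
      R q = -(q.1 * Real.sin q.2) *
        Real.sqrt (ω0 ^ 2 - ωc ^ 2 * Real.sin (q.1 / r0) ^ 2)) :
    DifferentiableOn ℝ R U ∧
    (∀ q ∈ U, fderiv ℝ R q = 0 ↔
      (q.2 = π / 2 ∧
        ωc ^ 2 * Real.sin (q.1 / r0) *
          (Real.sin (q.1 / r0) + (q.1 / r0) * Real.cos (q.1 / r0)) = ω0 ^ 2)) ∧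
    {q ∈ U | fderiv ℝ R q = 0}.Infinite := by
  set F : ℝ → ℝ := fun r => -(r * √(ω0 ^ 2 - ωc ^ 2 * sin (r / r0) ^ 2))
  have hRF : R = fun q => F q.1 * sin q.2 := funext fun q => by rw [hR]; ring
  have hF := hasDerivAt_neg_mul_sqrt_plasma ω0 ωc r0 (by nlinarith)
  have hcrit : ∀ q ∈ U, fderiv ℝ R q = 0 ↔ (q.2 = π / 2 ∧
      ωc ^ 2 * sin (q.1 / r0) * (sin (q.1 / r0) + (q.1 / r0) * cos (q.1 / r0)) = ω0 ^ 2) := by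
    rintro ⟨r, θ⟩ hq
    rw [hU] at hq
    obtain ⟨hr, hθ₀, hθπ⟩ := hq
    have hsin : sin θ ≠ 0 := (sin_pos_of_pos_of_lt_pi hθ₀ hθπ).ne'
    have hsqrt : 0 < √(ω0 ^ 2 - ωc ^ 2 * sin (r / r0) ^ 2) :=
      sqrt_pos.2 (by nlinarith [sin_sq_le_one (r / r0)])
    have hFr : F r ≠ 0 := neg_ne_zero.2 (mul_pos hr hsqrt).ne'
    rw [hRF, fderiv_mul_prod_eq_zero_iff (hF r) (hasDerivAt_sin θ),
      mul_eq_zero_iff_right hsin, mul_eq_zero_iff_left hFr, cos_eq_zero_iff_of_mem_Ioo hθ₀ hθπ,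
      neg_div, neg_eq_zero, div_eq_zero_iff, or_iff_left hsqrt.ne', sub_eq_zero, eq_comm, and_comm]
  refine ⟨?_, hcrit, ?_⟩
  · rw [hRF]
    rintro ⟨r, θ⟩ -
    exact (hasFDerivAt_mul_prod (hF r) (hasDerivAt_sin θ)).differentiableAt.differentiableWithinAt
  · have hinj : Function.Injective fun x : ℝ => (r0 * x, π / 2) :=
      fun x y h => mul_left_cancel₀ hr0.ne' (Prod.mk.inj h).1
    refine ((infinite_setOf_mul_sin_mul_sin_add_mul_cos_eq (pow_pos hωc 2)
      (sq_nonneg ω0)).image hinj.injOn).mono ?_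
    rintro _ ⟨x, ⟨hx, hφ⟩, rfl⟩
    have hmem : (r0 * x, π / 2) ∈ U := by
      rw [hU]
      exact ⟨mul_pos hr0 hx, by positivity, by linarith [pi_pos]⟩
    refine ⟨hmem, (hcrit _ hmem).2 ⟨rfl, ?_⟩⟩
    simpa only [mul_div_cancel_left₀ _ hr0.ne'] using hφ
end
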